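/- arXiv:0902.2274 — 6 statements merged into one kernel-verified Lean document; each statement's English description precedes it below -/
import Mathlib

section
/- Fix an integer a ≥ 2 and an integer m ≥ 1. The set of right 0-pyramids of size m and the set of positive (a·m, m)-strings have the same cardinality. -/
/-!
Dropping pieces one at a time, the first at `0` and each at most `a - 1` to the right of the
previous one, builds a right pyramid in which the newest piece is the leftmost uncovered one.
Removing the leftmost uncovered piece undoes the last drop, so right pyramids of size `m`
correspond to such drop sequences `v₀ = 0, v₁, …, v_{m-1}`. Putting the `i`-th one of a string at
position `a * i - vᵢ` turns drop sequences into sets of positions `p₀ < ⋯ < p_{m-1}` with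
`pᵢ ≤ a * i`, and this ballot condition is exactly the positivity of the string.
-/

/-- A pyramid made of horizontal pieces of length `a`. -/
def IsPyramid (a : ℕ) (P : Finset (ℤ × ℕ)) : Prop :=
  ((0 : ℤ), (0 : ℕ)) ∈ P ∧
  (∀ p ∈ P, p.2 = 0 → p = ((0 : ℤ), (0 : ℕ))) ∧
  (∀ p ∈ P, ∀ q ∈ P, p.2 = q.2 → p ≠ q → (a : ℤ) ≤ |p.1 - q.1|) ∧
  (∀ p ∈ P, 1 ≤ p.2 → ∃ q ∈ P, q.2 = p.2 - 1 ∧ |p.1 - q.1| ≤ (a : ℤ) - 1)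

/-- A right `0`-pyramid: a pyramid whose bottom piece is a leftmost piece. -/
def IsRightPyramid (a : ℕ) (P : Finset (ℤ × ℕ)) : Prop :=
  IsPyramid a P ∧ ∀ p ∈ P, 0 ≤ p.1

/-- An `(n, m)`-string: a sequence of `0`s and `1`s of length `n` (modelled as a
function `ℕ → Bool` vanishing from position `n` on) with exactly `m` ones. -/
def IsString (n m : ℕ) (x : ℕ → Bool) : Prop :=
  (∀ u, n ≤ u → x u = false) ∧
    ((Finset.range n).filter (fun u => x u = true)).card = m

/-- Positivity of a string of length `n` (pieces of length `a`): all partial sums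
`t_s = Σ_{u<s} (a·x_u − 1)` with `1 ≤ s ≤ n` are nonnegative. -/
def IsPositive (a n : ℕ) (x : ℕ → Bool) : Prop :=
  ∀ s, 1 ≤ s → s ≤ n →
    0 ≤ ∑ u ∈ Finset.range s, ((a : ℤ) * (if x u then 1 else 0) - 1)

open Finset

theorem Finset.eq_and_eq_of_insert_eq_insert {α : Type*} [LinearOrder α] {M M' : α}
    {T T' : Finset α} (hT : ∀ q ∈ T, q < M) (hT' : ∀ q ∈ T', q < M')
    (h : insert M T = insert M' T') : M = M' ∧ T = T' := by
  have hle : ∀ {M M' : α} {T T' : Finset α}, (∀ q ∈ T', q < M') → insert M T = insert M' T' →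
      M ≤ M' := fun hT' h => by
    rcases mem_insert.1 (h ▸ mem_insert_self _ _) with h | h
    · exact h.le
    · exact (hT' _ h).le
  obtain rfl := le_antisymm (hle hT' h) (hle hT h.symm)
  refine ⟨rfl, ?_⟩
  rw [← erase_insert fun h => lt_irrefl _ (hT _ h), h, erase_insert fun h => lt_irrefl _ (hT' _ h)]

def landingHeight (a : ℕ) (P : Finset (ℤ × ℕ)) (v : ℤ) : ℕ :=
  P.sup fun p => if |v - p.1| ≤ (a : ℤ) - 1 then p.2 + 1 else 0

/-- Pieces are listed newest first. -/
def pile (a : ℕ) : List ℕ → Finset (ℤ × ℕ)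
  | [] => ∅
  | v :: r => insert ((v : ℤ), landingHeight a (pile a r) v) (pile a r)

inductive IsDropSeq (a : ℕ) : List ℕ → Prop
  | single : IsDropSeq a [0]
  | cons {v w : ℕ} {t : List ℕ} : IsDropSeq a (w :: t) → v ≤ w + (a - 1) → IsDropSeq a (v :: w :: t)

def IsUncovered (a : ℕ) (P : Finset (ℤ × ℕ)) (p : ℤ × ℕ) : Prop :=
  ∀ q ∈ P, |q.1 - p.1| ≤ (a : ℤ) - 1 → q.2 ≤ p.2

section Landing

variable {a : ℕ} {P : Finset (ℤ × ℕ)} {v : ℤ}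

theorem landingHeight_le_iff {n : ℕ} :
    landingHeight a P v ≤ n ↔ ∀ p ∈ P, |v - p.1| ≤ (a : ℤ) - 1 → p.2 + 1 ≤ n := by
  simp only [landingHeight, Finset.sup_le_iff]
  refine forall₂_congr fun p _ => ?_
  split_ifs with h <;> simp [h]

theorem le_landingHeight {p : ℤ × ℕ} (hp : p ∈ P) (hov : |v - p.1| ≤ (a : ℤ) - 1) :
    p.2 + 1 ≤ landingHeight a P v :=
  landingHeight_le_iff.1 le_rfl p hp hov

theorem exists_of_landingHeight_pos (h : 0 < landingHeight a P v) :
    ∃ p ∈ P, p.2 + 1 = landingHeight a P v ∧ |v - p.1| ≤ (a : ℤ) - 1 := by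
  have hne : P.Nonempty := nonempty_iff_ne_empty.2 (by rintro rfl; simp [landingHeight] at h)
  obtain ⟨p, hp, hmax⟩ := exists_mem_eq_sup P hne
    fun p => if |v - p.1| ≤ (a : ℤ) - 1 then p.2 + 1 else 0
  rw [landingHeight, hmax] at h ⊢
  split_ifs at h ⊢ with hov
  · exact ⟨p, hp, rfl, hov⟩
  · exact absurd h (lt_irrefl 0)

theorem mk_landingHeight_notMem (ha : 1 ≤ a) : (v, landingHeight a P v) ∉ P := fun h => by
  have := le_landingHeight (a := a) (v := v) h (by rw [sub_self, abs_zero]; omega)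
  omega

theorem isUncovered_insert_mk_landingHeight :
    IsUncovered a (insert (v, landingHeight a P v) P) (v, landingHeight a P v) := by
  intro q hq hov
  rcases mem_insert.1 hq with rfl | hq
  · exact le_rfl
  · have := le_landingHeight hq (by rwa [abs_sub_comm] at hov)
    dsimp only at this ⊢
    omega

theorem eq_mk_landingHeight_of_isUncovered (ha : 1 ≤ a) {p : ℤ × ℕ}
    (hp : p ∈ insert (v, landingHeight a P v) P)
    (hu : IsUncovered a (insert (v, landingHeight a P v) P) p) (hpv : p.1 = v) :
    p = (v, landingHeight a P v) := by
  refine (mem_insert.1 hp).resolve_right fun hpP => ?_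
  have hov : |v - p.1| ≤ (a : ℤ) - 1 := by rw [hpv, sub_self, abs_zero]; omega
  have := le_landingHeight hpP hov
  have := hu _ (mem_insert_self _ _) hov
  dsimp only at this
  omega

end Landing

section Pyramid

variable {a : ℕ} {P : Finset (ℤ × ℕ)}

theorem isPyramid_singleton_zero : IsPyramid a {(0, 0)} := by
  refine ⟨mem_singleton_self _, fun p hp _ => mem_singleton.1 hp,
    fun p hp q hq _ hne => absurd ((mem_singleton.1 hp).trans (mem_singleton.1 hq).symm) hne,
    fun p hp h1 => ?_⟩
  rw [mem_singleton.1 hp] at h1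
  simp at h1

theorem IsPyramid.insert_mk_landingHeight (hP : IsPyramid a P) {v : ℤ}
    (hH : 0 < landingHeight a P v) : IsPyramid a (insert (v, landingHeight a P v) P) := by
  obtain ⟨hbase, hground, hsep, hsupp⟩ := hP
  have hsep_new : ∀ q ∈ P, q.2 = landingHeight a P v → (a : ℤ) ≤ |v - q.1| := fun q hq hqH => by
    by_contra! hlt
    have := le_landingHeight hq (by omega : |v - q.1| ≤ (a : ℤ) - 1)
    omega
  refine ⟨mem_insert_of_mem hbase, fun p hp hp0 => ?_, fun p hp q hq hpq hne => ?_,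
    fun p hp hp1 => ?_⟩
  · rcases mem_insert.1 hp with rfl | hp
    · exact absurd hp0 hH.ne'
    · exact hground p hp hp0
  · rcases mem_insert.1 hp with rfl | hp <;> rcases mem_insert.1 hq with rfl | hq
    · exact absurd rfl hne
    · exact hsep_new q hq hpq.symm
    · rw [abs_sub_comm]; exact hsep_new p hp hpq
    · exact hsep p hp q hq hpq hne
  · rcases mem_insert.1 hp with rfl | hp
    · obtain ⟨q, hq, hqH, hov⟩ := exists_of_landingHeight_pos hH
      exact ⟨q, mem_insert_of_mem hq, by dsimp only; omega, hov⟩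
    · obtain ⟨q, hq, hqh, hov⟩ := hsupp p hp hp1
      exact ⟨q, mem_insert_of_mem hq, hqh, hov⟩

theorem IsPyramid.erase (hP : IsPyramid a P) {p : ℤ × ℕ} (hu : IsUncovered a P p)
    (hp : 0 < p.2) : IsPyramid a (P.erase p) := by
  obtain ⟨hbase, hground, hsep, hsupp⟩ := hP
  refine ⟨mem_erase.2 ⟨by rintro rfl; simp at hp, hbase⟩,
    fun q hq => hground q (mem_of_mem_erase hq),
    fun q hq r hr => hsep q (mem_of_mem_erase hq) r (mem_of_mem_erase hr), fun q hq hq1 => ?_⟩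
  obtain ⟨s, hs, hsq, hov⟩ := hsupp q (mem_of_mem_erase hq) hq1
  refine ⟨s, mem_erase.2 ⟨?_, hs⟩, hsq, hov⟩
  rintro rfl
  have := hu q (mem_of_mem_erase hq) hov
  omega

theorem IsPyramid.landingHeight_erase (hP : IsPyramid a P) {p : ℤ × ℕ} (hpP : p ∈ P)
    (hu : IsUncovered a P p) (hp : 0 < p.2) : landingHeight a (P.erase p) p.1 = p.2 := by
  obtain ⟨-, -, hsep, hsupp⟩ := hP
  refine le_antisymm (landingHeight_le_iff.2 fun q hq hov => ?_) ?_
  · obtain ⟨hqp, hqP⟩ := mem_erase.1 hq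
    have hle := hu q hqP (by rwa [abs_sub_comm] at hov)
    have hne : q.2 ≠ p.2 := fun h => by
      have := hsep q hqP p hpP h hqp
      rw [abs_sub_comm] at this
      omega
    omega
  · obtain ⟨s, hs, hsp, hov⟩ := hsupp p hpP hp
    have hsP : s ∈ P.erase p := mem_erase.2 ⟨by rintro rfl; omega, hs⟩
    have := le_landingHeight hsP hov
    omega

theorem IsPyramid.not_isUncovered_zero (hP : IsPyramid a P) (hcard : 2 ≤ #P) :
    ¬ IsUncovered a P (0, 0) := by
  obtain ⟨-, hground, -, hsupp⟩ := hP
  intro hu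
  have hpos : {q ∈ P | 0 < q.2}.Nonempty := by
    obtain ⟨q, hq, hq0⟩ := exists_mem_ne hcard (0, 0)
    exact ⟨q, mem_filter.2 ⟨hq, Nat.pos_of_ne_zero fun h => hq0 (hground q hq h)⟩⟩
  -- the lowest piece above the ground rests on the base
  obtain ⟨q, hq, hmin⟩ := exists_min_image _ (fun q : ℤ × ℕ => q.2) hpos
  obtain ⟨hqP, hq0⟩ := mem_filter.1 hq
  obtain ⟨s, hs, hsq, hov⟩ := hsupp q hqP hq0
  have hs0 : s.2 = 0 := by
    by_contra h
    have := hmin s (mem_filter.2 ⟨hs, Nat.pos_of_ne_zero h⟩)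
    omega
  rw [hground s hs hs0] at hov
  have := hu q hqP hov
  simp only at this
  omega

theorem exists_leftmost_isUncovered (hP : P.Nonempty) :
    ∃ p ∈ P, IsUncovered a P p ∧ ∀ q ∈ P, IsUncovered a P q → p.1 ≤ q.1 := by
  classical
  obtain ⟨t, ht, htop⟩ := exists_max_image P (fun p : ℤ × ℕ => p.2) hP
  obtain ⟨p, hp, hmin⟩ := exists_min_image {q ∈ P | IsUncovered a P q} (fun p => p.1)
    ⟨t, mem_filter.2 ⟨ht, fun q hq _ => htop q hq⟩⟩
  exact ⟨p, (mem_filter.1 hp).1, (mem_filter.1 hp).2,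
    fun q hq hqu => hmin q (mem_filter.2 ⟨hq, hqu⟩)⟩

end Pyramid

namespace IsDropSeq

variable {a : ℕ}

theorem ne_nil {r : List ℕ} (h : IsDropSeq a r) : r ≠ [] := by
  cases h <;> simp

theorem head_add_length_le (ha : 1 ≤ a) :
    ∀ {v : ℕ} {t : List ℕ}, IsDropSeq a (v :: t) → v + t.length ≤ a * t.length
  | _, _, single => by simp
  | _, _, cons h hv => by
    have := head_add_length_le ha h
    simp only [List.length_cons, Nat.mul_succ] at this ⊢
    omega

theorem exists_overlap :
    ∀ {v : ℕ} {t : List ℕ}, IsDropSeq a (v :: t) → ∀ {w : ℕ}, w ≤ v + (a - 1) →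
      ∃ u ∈ v :: t, u ≤ w ∧ w ≤ u + (a - 1)
  | _, _, single, w, hw => ⟨0, List.mem_singleton_self 0, Nat.zero_le w, hw⟩
  | v, _, cons h hv, w, hw => by
    rcases le_or_gt v w with hvw | hwv
    · exact ⟨v, List.mem_cons_self, hvw, hw⟩
    · obtain ⟨u, hu, huw, hwu⟩ := exists_overlap h (by omega : w ≤ _ + (a - 1))
      exact ⟨u, List.mem_cons_of_mem v hu, huw, hwu⟩

end IsDropSeq

section Pile

variable {a : ℕ}

theorem nonneg_of_mem_pile : ∀ {r : List ℕ} {p : ℤ × ℕ}, p ∈ pile a r → 0 ≤ p.1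
  | [], _, hp => absurd hp (notMem_empty _)
  | v :: r, p, hp => by
    rcases mem_insert.1 hp with rfl | hp
    · exact Int.natCast_nonneg v
    · exact nonneg_of_mem_pile hp

theorem exists_mem_pile_of_mem : ∀ {r : List ℕ} {u : ℕ}, u ∈ r → ∃ h, ((u : ℤ), h) ∈ pile a r
  | v :: r, u, hu => by
    rcases List.mem_cons.1 hu with rfl | hu
    · exact ⟨_, mem_insert_self _ _⟩
    · obtain ⟨h, hh⟩ := exists_mem_pile_of_mem hu
      exact ⟨h, mem_insert_of_mem hh⟩

theorem card_pile (ha : 1 ≤ a) : ∀ r : List ℕ, #(pile a r) = r.length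
  | [] => rfl
  | v :: r => by rw [pile, card_insert_of_notMem (mk_landingHeight_notMem ha), card_pile ha r]; rfl

theorem pile_singleton_zero : pile a [0] = {(0, 0)} := by
  simp [pile, landingHeight]

theorem landingHeight_pile_pos (ha : 1 ≤ a) {v w : ℕ} {t : List ℕ}
    (h : IsDropSeq a (w :: t)) (hv : v ≤ w + (a - 1)) :
    0 < landingHeight a (pile a (w :: t)) v := by
  obtain ⟨u, hu, huv, hvu⟩ := h.exists_overlap hv
  obtain ⟨k, hk⟩ := exists_mem_pile_of_mem (a := a) hu
  have := le_landingHeight (a := a) (v := v) hk (by dsimp only; rw [abs_le]; omega)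
  omega

theorem isRightPyramid_pile (ha : 1 ≤ a) {r : List ℕ} (hr : IsDropSeq a r) :
    IsRightPyramid a (pile a r) := by
  refine ⟨?_, fun p => nonneg_of_mem_pile⟩
  induction hr with
  | single => rw [pile_singleton_zero]; exact isPyramid_singleton_zero
  | cons h hv ih => exact ih.insert_mk_landingHeight (landingHeight_pile_pos ha h hv)

theorem head_le_of_isUncovered :
    ∀ {v : ℕ} {t : List ℕ}, IsDropSeq a (v :: t) → ∀ p ∈ pile a (v :: t),
      IsUncovered a (pile a (v :: t)) p → (v : ℤ) ≤ p.1
  | _, _, .single, p, hp, _ => nonneg_of_mem_pile hp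
  | v, w :: t, .cons h hv, p, hp, hu => by
    rcases mem_insert.1 hp with rfl | hp
    · exact le_rfl
    · have hwp := head_le_of_isUncovered h p hp fun q hq => hu q (mem_insert_of_mem hq)
      by_contra! hpv
      have hov : |(v : ℤ) - p.1| ≤ (a : ℤ) - 1 := by rw [abs_le]; omega
      have := le_landingHeight hp hov
      have := hu _ (mem_insert_self _ _) hov
      dsimp only at this
      omega

theorem IsDropSeq.head_eq_and_pile_eq (ha : 1 ≤ a) {v v' : ℕ} {t t' : List ℕ}
    (h : IsDropSeq a (v :: t)) (h' : IsDropSeq a (v' :: t'))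
    (heq : pile a (v :: t) = pile a (v' :: t')) : v = v' ∧ pile a t = pile a t' := by
  set q : ℤ × ℕ := (v, landingHeight a (pile a t) v)
  set q' : ℤ × ℕ := (v', landingHeight a (pile a t') v')
  have hq : q ∈ pile a (v' :: t') := heq ▸ mem_insert_self _ _
  have hq' : q' ∈ pile a (v :: t) := heq ▸ mem_insert_self _ _
  have hu : IsUncovered a (pile a (v' :: t')) q := heq ▸ isUncovered_insert_mk_landingHeight
  have hu' : IsUncovered a (pile a (v :: t)) q' := heq ▸ isUncovered_insert_mk_landingHeight
  have hvv' : (v : ℤ) ≤ v' := head_le_of_isUncovered h q' hq' hu'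
  have hv'v : (v' : ℤ) ≤ v := head_le_of_isUncovered h' q hq hu
  obtain rfl : v = v' := by omega
  have hqq : q' = q := eq_mk_landingHeight_of_isUncovered ha hq' hu' rfl
  refine ⟨rfl, ?_⟩
  calc pile a t = (pile a (v :: t)).erase q := (erase_insert (mk_landingHeight_notMem ha)).symm
    _ = (pile a (v :: t')).erase q' := by rw [heq, hqq]
    _ = pile a t' := erase_insert (mk_landingHeight_notMem ha)

theorem IsDropSeq.eq_of_pile_eq (ha : 1 ≤ a) :
    ∀ {r r' : List ℕ}, IsDropSeq a r → IsDropSeq a r' → pile a r = pile a r' → r = r'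
  | _, _, .single, .single, _ => rfl
  | _, _, .single, .cons _ _, heq
  | _, _, .cons _ _, .single, heq => by
    have := congrArg card heq
    simp [card_pile ha] at this
  | _, _, .cons h hv, .cons h' hv', heq => by
    obtain ⟨rfl, ht⟩ := head_eq_and_pile_eq ha (.cons h hv) (.cons h' hv') heq
    rw [eq_of_pile_eq ha h h' ht]

theorem IsPyramid.isDropSeq_cons_and_pile_eq {P : Finset (ℤ × ℕ)}
    (hP : IsPyramid a P) {p : ℤ × ℕ} (hp : p ∈ P) (hu : IsUncovered a P p)
    (hleft : ∀ q ∈ P, IsUncovered a P q → p.1 ≤ q.1) (hp0 : 0 < p.2) (hp1 : 0 ≤ p.1)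
    {r : List ℕ} (hr : IsDropSeq a r) (hpile : pile a r = P.erase p) :
    IsDropSeq a (p.1.toNat :: r) ∧ pile a (p.1.toNat :: r) = P := by
  obtain ⟨w, t, rfl⟩ := List.exists_cons_of_ne_nil hr.ne_nil
  have hwp : p.1 ≤ w + (a - 1 : ℕ) := by
    by_contra! hlt
    -- otherwise the newest piece of `pile a (w :: t)` would stay uncovered in `P`, left of `p`
    set q : ℤ × ℕ := (w, landingHeight a (pile a t) w) with hq
    have hqP : q ∈ P.erase p := hpile ▸ mem_insert_self _ _
    have hqu : IsUncovered a (P.erase p) q := hpile ▸ isUncovered_insert_mk_landingHeight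
    have hqu' : IsUncovered a P q := fun s hs hov => by
      rcases eq_or_ne s p with rfl | hsp
      · rw [abs_le, hq] at hov
        omega
      · exact hqu s (mem_erase.2 ⟨hsp, hs⟩) hov
    have : p.1 ≤ w := hleft q (mem_of_mem_erase hqP) hqu'
    omega
  refine ⟨.cons hr (by omega), ?_⟩
  rw [pile, hpile, Int.toNat_of_nonneg hp1, hP.landingHeight_erase hp hu hp0, Prod.mk.eta,
    insert_erase hp]

theorem IsRightPyramid.exists_isDropSeq_pile_eq {P : Finset (ℤ × ℕ)}
    (hP : IsRightPyramid a P) : ∃ r, IsDropSeq a r ∧ pile a r = P := by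
  obtain ⟨n, hn⟩ : ∃ n, #P = n := ⟨_, rfl⟩
  induction n generalizing P with
  | zero => exact absurd hn (card_ne_zero_of_mem hP.1.1)
  | succ n ih =>
    obtain ⟨hpyr, hright⟩ := hP
    rcases Nat.lt_or_ge #P 2 with h1 | h2
    · refine ⟨[0], .single, ?_⟩
      rw [pile_singleton_zero, eq_comm, eq_singleton_iff_unique_mem]
      exact ⟨hpyr.1, fun x hx => card_le_one.1 (by omega) x hx _ hpyr.1⟩
    · obtain ⟨p, hp, hu, hleft⟩ := exists_leftmost_isUncovered ⟨_, hpyr.1⟩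
      have hp0 : 0 < p.2 := Nat.pos_of_ne_zero fun h =>
        hpyr.not_isUncovered_zero h2 (hpyr.2.1 p hp h ▸ hu)
      obtain ⟨r, hr, hpile⟩ := ih ⟨hpyr.erase hu hp0, fun q hq => hright q (mem_of_mem_erase hq)⟩
        (by rw [card_erase_of_mem hp]; omega)
      exact ⟨_, hpyr.isDropSeq_cons_and_pile_eq hp hu hleft hp0 (hright p hp) hr hpile⟩

theorem bijOn_pile (ha : 1 ≤ a) (m : ℕ) :
    Set.BijOn (pile a) {r | IsDropSeq a r ∧ r.length = m} {P | IsRightPyramid a P ∧ #P = m} :=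
  ⟨fun r ⟨hr, hm⟩ => ⟨isRightPyramid_pile ha hr, (card_pile ha r).trans hm⟩,
    fun _ hr _ hr' => hr.1.eq_of_pile_eq ha hr'.1,
    fun _ ⟨hP, hm⟩ =>
      let ⟨r, hr, hpile⟩ := hP.exists_isDropSeq_pile_eq
      ⟨r, ⟨hr, (card_pile ha r).symm.trans (hpile ▸ hm)⟩, hpile⟩⟩

end Pile

section Ballot

variable {a : ℕ}

def IsBallot (a : ℕ) (S : Finset ℕ) : Prop :=
  ∀ p ∈ S, p ≤ a * #{q ∈ S | q < p}

/-- The `i`-th piece from the bottom, dropped at `v`, gives a one at position `a * i - v`. -/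
def onesOf (a : ℕ) : List ℕ → Finset ℕ
  | [] => ∅
  | v :: t => insert (a * t.length - v) (onesOf a t)

theorem isBallot_insert_iff {M : ℕ} {T : Finset ℕ} (hT : ∀ q ∈ T, q < M) :
    IsBallot a (insert M T) ↔ M ≤ a * #T ∧ IsBallot a T := by
  have hM : {q ∈ insert M T | q < M} = T := by
    rw [filter_insert, if_neg (lt_irrefl M), filter_true_of_mem hT]
  have hlt : ∀ p ∈ T, {q ∈ insert M T | q < p} = {q ∈ T | q < p} := fun p hp => by
    rw [filter_insert, if_neg (not_lt.2 (hT p hp).le)]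
  simp only [IsBallot, forall_mem_insert, hM]
  exact and_congr_right' (forall₂_congr fun p hp => by rw [hlt p hp])

namespace IsDropSeq

theorem lt_of_mem_onesOf (ha : 1 ≤ a) :
    ∀ {v : ℕ} {t : List ℕ}, IsDropSeq a (v :: t) → ∀ q ∈ onesOf a t, q < a * t.length - v
  | _, _, single => by simp [onesOf]
  | v, w :: t, cons h hv => fun q hq => by
    have hw := h.head_add_length_le ha
    have hq : q ≤ a * t.length - w := by
      rcases mem_insert.1 hq with rfl | hq
      · exact le_rfl
      · exact (lt_of_mem_onesOf ha h q hq).le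
    simp only [List.length_cons, Nat.mul_succ] at hw ⊢
    omega

theorem card_onesOf (ha : 1 ≤ a) {r : List ℕ} (hr : IsDropSeq a r) : #(onesOf a r) = r.length := by
  induction hr with
  | single => rfl
  | cons h hv ih =>
    rw [onesOf, card_insert_of_notMem fun hmem =>
      lt_irrefl _ (lt_of_mem_onesOf ha (.cons h hv) _ hmem), ih]
    rfl

theorem isBallot_onesOf (ha : 1 ≤ a) {r : List ℕ} (hr : IsDropSeq a r) :
    IsBallot a (onesOf a r) := by
  induction hr with
  | single => simp [onesOf, IsBallot]
  | cons h hv ih =>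
    rw [onesOf, isBallot_insert_iff (lt_of_mem_onesOf ha (.cons h hv)), h.card_onesOf ha]
    exact ⟨Nat.sub_le _ _, ih⟩

theorem eq_of_onesOf_eq (ha : 1 ≤ a) :
    ∀ {r r' : List ℕ}, IsDropSeq a r → IsDropSeq a r' → onesOf a r = onesOf a r' → r = r'
  | _, _, .single, .single, _ => rfl
  | _, _, .single, .cons h hv, heq
  | _, _, .cons h hv, .single, heq => by
    have := congrArg card heq
    rw [card_onesOf ha (.cons h hv), card_onesOf ha .single] at this
    simp at this
  | v :: _, v' :: _, .cons h hv, .cons h' hv', heq => by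
    obtain ⟨hM, ht⟩ := eq_and_eq_of_insert_eq_insert (lt_of_mem_onesOf ha (.cons h hv))
      (lt_of_mem_onesOf ha (.cons h' hv')) heq
    have hlen := (h.card_onesOf ha).symm.trans (ht ▸ h'.card_onesOf ha)
    have hv1 := (IsDropSeq.cons h hv).head_add_length_le ha
    have hv2 := (IsDropSeq.cons h' hv').head_add_length_le ha
    rw [← hlen] at hM hv2
    obtain rfl : v = v' := by omega
    rw [eq_of_onesOf_eq ha h h' ht]

end IsDropSeq

theorem IsBallot.exists_isDropSeq_onesOf_eq (ha : 1 ≤ a) {S : Finset ℕ} (hS : IsBallot a S)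
    (hne : S.Nonempty) : ∃ r, IsDropSeq a r ∧ onesOf a r = S := by
  induction S using Finset.induction_on_max with
  | empty => exact absurd hne not_nonempty_empty
  | insert M T hT ih =>
    obtain ⟨hM, hT'⟩ := (isBallot_insert_iff hT).1 hS
    rcases T.eq_empty_or_nonempty with rfl | hTne
    · refine ⟨[0], .single, ?_⟩
      simp_all [onesOf]
    · obtain ⟨r, hr, rfl⟩ := ih hT' hTne
      obtain ⟨w, t, rfl⟩ := List.exists_cons_of_ne_nil hr.ne_nil
      have hlen := hr.card_onesOf ha
      have hw := hr.head_add_length_le ha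
      have hmax := hT (a * t.length - w) (mem_insert_self _ _)
      refine ⟨(a * #(onesOf a (w :: t)) - M) :: w :: t, .cons hr ?_, ?_⟩
      · simp only [hlen, List.length_cons, Nat.mul_succ] at hM ⊢
        omega
      · rw [onesOf, hlen, Nat.sub_sub_self (hlen ▸ hM)]

theorem bijOn_onesOf (ha : 1 ≤ a) {m : ℕ} (hm : 1 ≤ m) :
    Set.BijOn (onesOf a) {r | IsDropSeq a r ∧ r.length = m} {S | #S = m ∧ IsBallot a S} :=
  ⟨fun _ ⟨hr, hm⟩ => ⟨(hr.card_onesOf ha).trans hm, hr.isBallot_onesOf ha⟩,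
    fun _ hr _ hr' => hr.1.eq_of_onesOf_eq ha hr'.1,
    fun _ ⟨hS, hB⟩ =>
      let ⟨r, hr, h⟩ := hB.exists_isDropSeq_onesOf_eq ha (card_pos.1 (hS ▸ hm))
      ⟨r, ⟨hr, (hr.card_onesOf ha).symm.trans (h ▸ hS)⟩, h⟩⟩

end Ballot

section Strings

variable {a : ℕ} {S : Finset ℕ}

theorem IsBallot.subset_range (ha : 1 ≤ a) (hS : IsBallot a S) : S ⊆ range (a * #S) :=
  fun p hp => mem_range.2 <| calc
    p ≤ a * #{q ∈ S | q < p} := hS p hp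
    _ < a * #S := Nat.mul_lt_mul_of_pos_left
      (card_lt_card (filter_ssubset.2 ⟨p, hp, lt_irrefl p⟩)) ha

theorem IsBallot.le_mul_card_filter_lt (hS : IsBallot a S) {s : ℕ} (hs : s ≤ a * #S) :
    s ≤ a * #{q ∈ S | q < s} := by
  by_cases hall : ∀ q ∈ S, q < s
  · rwa [filter_true_of_mem hall]
  push Not at hall
  obtain ⟨q, hq, hsq⟩ := hall
  -- the least element `p ≥ s` of `S` has the same elements of `S` below it as `s`
  obtain ⟨p, hp, hmin⟩ := exists_min_image {q ∈ S | s ≤ q} id ⟨q, mem_filter.2 ⟨hq, hsq⟩⟩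
  obtain ⟨hpS, hsp⟩ := mem_filter.1 hp
  have hfilter : {q ∈ S | q < p} = {q ∈ S | q < s} := filter_congr fun q hq =>
    ⟨fun hqp => not_le.1 fun hsq => (hmin q (mem_filter.2 ⟨hq, hsq⟩)).not_gt hqp,
      fun hqs => hqs.trans_le hsp⟩
  calc s ≤ p := hsp
    _ ≤ a * #{q ∈ S | q < p} := hS p hpS
    _ = a * #{q ∈ S | q < s} := by rw [hfilter]

theorem isBallot_of_le_mul_card_filter_lt {n : ℕ} (hS : S ⊆ range n)
    (h : ∀ s, 1 ≤ s → s ≤ n → s ≤ a * #{q ∈ S | q < s}) : IsBallot a S := fun p hp => by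
  by_contra! hlt
  have hpn := mem_range.1 (hS hp)
  have hmono : #{q ∈ S | q < a * #{q ∈ S | q < p} + 1} ≤ #{q ∈ S | q < p} :=
    card_le_card fun q hq => by
      simp only [mem_filter] at hq ⊢
      exact ⟨hq.1, by omega⟩
  have := h (a * #{q ∈ S | q < p} + 1) le_add_self (by omega)
  have := Nat.mul_le_mul_left a hmono
  omega

theorem isPositive_decide_mem_iff {n : ℕ} :
    IsPositive a n (fun u => decide (u ∈ S)) ↔
      ∀ s, 1 ≤ s → s ≤ n → s ≤ a * #{q ∈ S | q < s} := by
  have hsum : ∀ s, ∑ u ∈ range s, ((a : ℤ) * (if decide (u ∈ S) then 1 else 0) - 1) =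
      a * #{q ∈ S | q < s} - s := fun s => by
    have : {u ∈ range s | u ∈ S} = {q ∈ S | q < s} := by
      ext
      simp [and_comm]
    rw [sum_sub_distrib, ← mul_sum]
    simp only [decide_eq_true_eq]
    rw [sum_boole, this]
    simp
  simp only [IsPositive, hsum, sub_nonneg]
  norm_cast

theorem bijOn_decide_mem (ha : 1 ≤ a) (m : ℕ) :
    Set.BijOn (fun (S : Finset ℕ) u => decide (u ∈ S)) {S | #S = m ∧ IsBallot a S}
      {x | IsString (a * m) m x ∧ IsPositive a (a * m) x} := by
  refine ⟨fun S ⟨hS, hB⟩ => ?_, fun S _ S' _ h => ext fun u => by simpa using congrFun h u,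
    fun x ⟨hx, hpos⟩ => ?_⟩
  · have hsub : S ⊆ range (a * m) := hS ▸ hB.subset_range ha
    refine ⟨⟨fun u hu => decide_eq_false fun huS => ?_, ?_⟩,
      isPositive_decide_mem_iff.2 fun s _ hs => hB.le_mul_card_filter_lt (hS ▸ hs)⟩
    · exact (mem_range.1 (hsub huS)).not_ge hu
    · rwa [filter_congr (q := (· ∈ S)) (by simp), filter_mem_eq_inter, inter_eq_right.2 hsub]
  · set S := {u ∈ range (a * m) | x u = true}
    have hxS : (fun u => decide (u ∈ S)) = x := funext fun u => by
      by_cases hu : u < a * m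
      · simp [S, hu]
      · simp [S, hu, hx.1 u (not_lt.1 hu)]
    exact ⟨S, ⟨hx.2, isBallot_of_le_mul_card_filter_lt (filter_subset _ _)
      (isPositive_decide_mem_iff.1 (hxS ▸ hpos))⟩, hxS⟩

end Strings

/-- Right `0`-pyramids of size `m` are equinumerous with positive `(a·m, m)`-strings. -/
theorem right_pyramids_eq_positive_strings (a m : ℕ) (ha : 2 ≤ a) (hm : 1 ≤ m) :
    Nat.card {P : Finset (ℤ × ℕ) // IsRightPyramid a P ∧ P.card = m} =
      Nat.card {x : ℕ → Bool // IsString (a * m) m x ∧ IsPositive a (a * m) x} := by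
  replace ha : 1 ≤ a := by omega
  calc Nat.card {P : Finset (ℤ × ℕ) // IsRightPyramid a P ∧ P.card = m}
      = Nat.card {r : List ℕ // IsDropSeq a r ∧ r.length = m} :=
        (Nat.card_congr (bijOn_pile ha m).equiv).symm
    _ = Nat.card {S : Finset ℕ // #S = m ∧ IsBallot a S} :=
        Nat.card_congr (bijOn_onesOf ha hm).equiv
    _ = Nat.card {x : ℕ → Bool // IsString (a * m) m x ∧ IsPositive a (a * m) x} :=
        Nat.card_congr (bijOn_decide_mem ha m).equiv
end

section
/- Let m ≥ 1 be an integer. Every (2m, m)-string w = x_1 … x_{2m} with x_1 = 1 can be written in a unique way as a concatenation w = w_1 w_2 ⋯ w_r of nonempty strings (r ≥ 1) such that for each odd index i the block w_i is a positive string, and for each even index i the reversal of w_i is a positive string. -/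
/-- A positive string (dimer case `a = 2`): a nonempty string of `0`s and `1`s
with equally many `0`s and `1`s, all of whose partial sums
`t_s = Σ_{u ≤ s} (2·x_u − 1)` are nonnegative. -/
def PosStr (l : List Bool) : Prop :=
  l ≠ [] ∧ l.count true = l.count false ∧
    ∀ s ≤ l.length,
      0 ≤ ((l.take s).map (fun b => 2 * (if b then (1 : ℤ) else 0) - 1)).sum

/-!
Read a string as a lattice path, `1` an up-step and `0` a down-step. For a balanced string,
the reversal is positive exactly when the complement is, so the blocks after the first are,
once complemented, a decomposition of the complemented rest of the same kind. The first block
is forced: it is the prefix ending at the last visit of height `0` before the path first drops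
below `0` (the whole string if it never does), so that the rest starts with a `0`; and a
positive string followed by a `0` is never a proper prefix of another positive string.
-/

def stepValue (b : Bool) : ℤ := 2 * (if b then 1 else 0) - 1

def pathHeight (l : List Bool) : ℤ := (l.map stepValue).sum

@[simp] lemma stepValue_true : stepValue true = 1 := rfl
@[simp] lemma stepValue_false : stepValue false = -1 := rfl
@[simp] lemma stepValue_not (b : Bool) : stepValue (!b) = -stepValue b := by cases b <;> rfl

@[simp] lemma pathHeight_nil : pathHeight [] = 0 := rfl

@[simp] lemma pathHeight_cons (b : Bool) (l : List Bool) :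
    pathHeight (b :: l) = stepValue b + pathHeight l := by
  simp [pathHeight]

@[simp] lemma pathHeight_append (l₁ l₂ : List Bool) :
    pathHeight (l₁ ++ l₂) = pathHeight l₁ + pathHeight l₂ := by
  simp [pathHeight]

@[simp] lemma pathHeight_reverse (l : List Bool) : pathHeight l.reverse = pathHeight l := by
  simp [pathHeight, List.map_reverse, List.sum_reverse]

@[simp] lemma pathHeight_map_not (l : List Bool) : pathHeight (l.map not) = -pathHeight l := by
  induction l with
  | nil => rfl
  | cons b l ih => simp [ih]; ring

lemma pathHeight_eq_count_sub_count (l : List Bool) :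
    pathHeight l = l.count true - l.count false := by
  induction l with
  | nil => rfl
  | cons b l ih => cases b <;> simp [ih] <;> ring

lemma pathHeight_take_add_pathHeight_drop (l : List Bool) (s : ℕ) :
    pathHeight (l.take s) + pathHeight (l.drop s) = pathHeight l := by
  rw [← pathHeight_append, List.take_append_drop]

lemma pathHeight_take_succ {l : List Bool} {k : ℕ} (hk : k < l.length) :
    pathHeight (l.take (k + 1)) = pathHeight (l.take k) + stepValue l[k] := by
  rw [List.take_add_one, List.getElem?_eq_getElem hk, Option.toList_some, pathHeight_append]
  simp [pathHeight]

lemma posStr_iff {l : List Bool} :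
    PosStr l ↔ l ≠ [] ∧ pathHeight l = 0 ∧ ∀ s ≤ l.length, 0 ≤ pathHeight (l.take s) := by
  have : l.count true = l.count false ↔ pathHeight l = 0 := by
    rw [pathHeight_eq_count_sub_count]; omega
  rw [PosStr, this]
  rfl

namespace PosStr

lemma head? {l : List Bool} (h : PosStr l) : l.head? = some true := by
  obtain ⟨hne, -, hpos⟩ := posStr_iff.mp h
  obtain _ | ⟨_ | _, l⟩ := l
  · exact absurd rfl hne
  · simpa using hpos 1
  · rfl

lemma map_not_iff {l : List Bool} :
    PosStr (l.map not) ↔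
      l ≠ [] ∧ pathHeight l = 0 ∧ ∀ s ≤ l.length, pathHeight (l.take s) ≤ 0 := by
  simp only [posStr_iff, ← List.map_take, pathHeight_map_not, List.length_map, ne_eq,
    List.map_eq_nil_iff, neg_nonneg, neg_eq_zero]

lemma eq_nil_of_posStr_append {w u t : List Bool} (hw : PosStr w) (hwu : PosStr (w ++ u))
    (ht : (u ++ t).head? ≠ some true) : u = [] := by
  obtain _ | ⟨_ | _, u⟩ := u
  · rfl
  · have h0 := (posStr_iff.mp hw).2.1
    have := (posStr_iff.mp hwu).2.2 (w.length + 1) (by simp)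
    rw [show w ++ false :: u = (w ++ [false]) ++ u by simp, List.take_left' (by simp)] at this
    simp [h0] at this
  · simp at ht

lemma eq_of_append_eq {w₁ w₂ t₁ t₂ : List Bool} (h₁ : PosStr w₁) (h₂ : PosStr w₂)
    (he : w₁ ++ t₁ = w₂ ++ t₂) (ht₁ : t₁.head? ≠ some true) (ht₂ : t₂.head? ≠ some true) :
    w₁ = w₂ := by
  rcases List.append_eq_append_iff.mp he with ⟨u, rfl, rfl⟩ | ⟨u, rfl, rfl⟩
  · rw [h₁.eq_nil_of_posStr_append h₂ ht₁, List.append_nil]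
  · rw [h₂.eq_nil_of_posStr_append h₁ ht₂, List.append_nil]

end PosStr

lemma posStr_reverse_iff {l : List Bool} : PosStr l.reverse ↔ PosStr (l.map not) := by
  rw [posStr_iff, PosStr.map_not_iff]
  simp only [ne_eq, List.reverse_eq_nil_iff, pathHeight_reverse, List.length_reverse,
    List.take_reverse]
  refine and_congr_right fun _ => and_congr_right fun h0 => ?_
  have hdrop (s : ℕ) : pathHeight (l.drop s) = -pathHeight (l.take s) := by
    linarith [pathHeight_take_add_pathHeight_drop l s]
  simp only [hdrop, neg_nonneg]
  constructor
  · intro h s hs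
    simpa [Nat.sub_sub_self hs] using h (l.length - s) (Nat.sub_le _ _)
  · exact fun h s _ => h _ (Nat.sub_le _ _)

lemma exists_posStr_append {l : List Bool} (hl : pathHeight l = 0)
    (hhead : l.head? = some true) : ∃ w t, l = w ++ t ∧ PosStr w ∧ t.head? ≠ some true := by
  by_cases hnonneg : ∀ s ≤ l.length, 0 ≤ pathHeight (l.take s)
  · exact ⟨l, [], by simp, posStr_iff.mpr ⟨by rintro rfl; simp at hhead, hl, hnonneg⟩, by simp⟩
  push Not at hnonneg
  obtain ⟨j, ⟨hjl, hjneg⟩, hmin⟩ : ∃ j, (j ≤ l.length ∧ pathHeight (l.take j) < 0) ∧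
      ∀ s < j, ¬(s ≤ l.length ∧ pathHeight (l.take s) < 0) :=
    ⟨Nat.find hnonneg, Nat.find_spec hnonneg, fun _ => Nat.find_min hnonneg⟩
  obtain ⟨k, rfl⟩ : ∃ k, j = k + 1 :=
    Nat.exists_eq_succ_of_ne_zero (by rintro rfl; simp at hjneg)
  have hk : k < l.length := hjl
  have hprefix (s : ℕ) (hs : s ≤ k) : 0 ≤ pathHeight (l.take s) := by
    have := hmin s (by omega); push Not at this; exact this (by omega)
  -- the path leaves the nonnegative half-plane at step k, so it sits at height 0 just before
  have hstep := pathHeight_take_succ hk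
  have hfalse : l[k] = false := by
    cases hb : l[k] <;> simp only [hb, stepValue_true] at hstep ⊢; linarith [hprefix k le_rfl]
  have hk0 : k ≠ 0 := by
    rintro rfl
    rw [List.head?_eq_getElem?, List.getElem?_eq_getElem hk, hfalse] at hhead
    simp at hhead
  refine ⟨l.take k, l.drop k, (List.take_append_drop k l).symm, posStr_iff.mpr ⟨?_, ?_, ?_⟩, ?_⟩
  · simpa [List.take_eq_nil_iff] using ⟨hk0, List.ne_nil_of_length_pos (by omega)⟩
  · simp only [hfalse, stepValue_false] at hstep; linarith [hprefix k le_rfl]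
  · intro s hs
    have hs : s ≤ k := by simp at hs; omega
    rw [List.take_take, min_eq_left hs]
    exact hprefix s hs
  · simp [List.head?_drop, List.getElem?_eq_getElem hk, hfalse]

def AlternatingPosBlocks (L : List (List Bool)) : Prop :=
  ∀ i : Fin L.length, if (i : ℕ) % 2 = 0 then PosStr (L.get i) else PosStr (L.get i).reverse

namespace AlternatingPosBlocks

lemma cons_iff {w : List Bool} {L : List (List Bool)} :
    AlternatingPosBlocks (w :: L) ↔ PosStr w ∧ AlternatingPosBlocks (L.map (List.map not)) := by
  -- complementing every later block shifts their parity by one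
  have hshift (i : ℕ) (x : List Bool) :
      (if (i + 1) % 2 = 0 then PosStr x else PosStr x.reverse) ↔
        if i % 2 = 0 then PosStr (x.map not) else PosStr (x.map not).reverse := by
    rcases Nat.mod_two_eq_zero_or_one i with h | h
    · simp [h, Nat.succ_mod_two_eq_one_iff.mpr h, posStr_reverse_iff]
    · simp [h, Nat.succ_mod_two_eq_zero_iff.mpr h, posStr_reverse_iff, Function.comp_def]
  simp only [AlternatingPosBlocks, Fin.forall_iff, List.length_cons, List.length_map,
    List.get_eq_getElem, List.getElem_map]
  constructor
  · intro h
    refine ⟨by simpa using h 0 (by simp), fun i hi => (hshift i _).mp ?_⟩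
    simpa using h (i + 1) (by omega)
  · rintro ⟨hw, h⟩ (_ | i) hi
    · simpa using hw
    · simpa using (hshift i _).mpr (h i (by omega))

lemma ne_nil {L : List (List Bool)} (h : AlternatingPosBlocks L) : ∀ w ∈ L, w ≠ [] := by
  intro w hw
  obtain ⟨i, hi, rfl⟩ := List.mem_iff_getElem.mp hw
  have := h ⟨i, hi⟩
  split_ifs at this
  · exact this.1
  · simpa using this.1

lemma head?_flatten_ne {L : List (List Bool)} (h : AlternatingPosBlocks L) :
    L.flatten.head? ≠ some false := by
  obtain _ | ⟨w, L⟩ := L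
  · simp
  · rw [List.flatten_cons, List.head?_append, (cons_iff.mp h).1.head?]
    simp

theorem eq_of_flatten_eq : ∀ {L₁ L₂ : List (List Bool)}, AlternatingPosBlocks L₁ →
    AlternatingPosBlocks L₂ → L₁.flatten = L₂.flatten → L₁ = L₂
  | [], [], _, _, _ => rfl
  | [], w :: _, _, h₂, he =>
    absurd (List.flatten_eq_nil_iff.mp he.symm w (by simp)) (h₂.ne_nil w (by simp))
  | w :: _, [], h₁, _, he =>
    absurd (List.flatten_eq_nil_iff.mp he w (by simp)) (h₁.ne_nil w (by simp))
  | w₁ :: M₁, w₂ :: M₂, h₁, h₂, he => by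
    rw [cons_iff] at h₁ h₂
    rw [List.flatten_cons, List.flatten_cons] at he
    obtain rfl : w₁ = w₂ := h₁.1.eq_of_append_eq h₂.1 he
      (by simpa [← List.map_flatten] using h₁.2.head?_flatten_ne)
      (by simpa [← List.map_flatten] using h₂.2.head?_flatten_ne)
    have hM := eq_of_flatten_eq h₁.2 h₂.2
      (by rw [← List.map_flatten, ← List.map_flatten, List.append_cancel_left he])
    rw [Bool.involutive_not.list_map.list_map.injective hM]
termination_by L₁ => L₁.length

end AlternatingPosBlocks

theorem exists_alternatingPosBlocks (l : List Bool) (hl : pathHeight l = 0)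
    (hhead : l.head? ≠ some false) : ∃ L, L.flatten = l ∧ AlternatingPosBlocks L := by
  cases hl₀ : l.head? with
  | none => exact ⟨[], (List.head?_eq_none_iff.mp hl₀).symm, nofun⟩
  | some b =>
    obtain rfl : b = true := by simpa [hl₀] using hhead
    obtain ⟨w, t, rfl, hw, ht⟩ := exists_posStr_append hl hl₀
    have htl : pathHeight t = 0 := by
      simpa [(posStr_iff.mp hw).2.1] using hl
    have hshorter : t.length < (w ++ t).length := by
      simpa using List.length_pos_iff.mpr hw.1
    obtain ⟨M, hM, hMalt⟩ :=
      exists_alternatingPosBlocks (t.map not) (by simp [htl]) (by simpa using ht)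
    refine ⟨w :: M.map (List.map not), ?_, AlternatingPosBlocks.cons_iff.mpr
      ⟨hw, by rwa [Bool.involutive_not.list_map.list_map]⟩⟩
    rw [List.flatten_cons, ← List.map_flatten, hM, Bool.involutive_not.list_map t]
termination_by l.length

theorem string_decomposition_general (m : ℕ) (l : List Bool)
    (hlen : l.length = 2 * m) (hcount : l.count true = m)
    (hhead : l.head? = some true) :
    ∃! L : List (List Bool),
      L.flatten = l ∧ (∀ w ∈ L, w ≠ []) ∧
      ∀ i : Fin L.length,
        if (i : ℕ) % 2 = 0 then PosStr (L.get i) else PosStr (L.get i).reverse := by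
  have hl : pathHeight l = 0 := by
    have := l.count_true_add_count_false
    rw [pathHeight_eq_count_sub_count]
    omega
  obtain ⟨L, hflat, hL⟩ := exists_alternatingPosBlocks l hl (by simp [hhead])
  refine ⟨L, ⟨hflat, hL.ne_nil, hL⟩, ?_⟩
  rintro L' ⟨hflat', -, hL'⟩
  exact AlternatingPosBlocks.eq_of_flatten_eq hL' hL (hflat'.trans hflat.symm)

/-- Every `(2m, m)`-string starting with `1` can be written uniquely as a
concatenation `w₁ w₂ ⋯ w_r` of nonempty blocks where the odd-numbered blocks
are positive strings and the reversals of the even-numbered blocks are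
positive strings. -/
theorem string_decomposition (m : ℕ) (hm : 1 ≤ m) (l : List Bool)
    (hlen : l.length = 2 * m) (hcount : l.count true = m)
    (hhead : l.head? = some true) :
    ∃! L : List (List Bool),
      L.flatten = l ∧ (∀ w ∈ L, w ≠ []) ∧
      ∀ i : Fin L.length,
        if (i : ℕ) % 2 = 0 then PosStr (L.get i) else PosStr (L.get i).reverse :=
  string_decomposition_general m l hlen hcount hhead
end

section
/- Fix an integer a ≥ 2 and an integer m ≥ 1. Then C(a·m − 1, m − 1) = Σ_{r=1}^{m} (a−1)^{r−1} · Σ ∏_{i=1}^{r} A_{m_i}, where the inner sum ranges over all compositions (m_1, …, m_r) of m into r positive integer parts, and A_k = (a·k)! / (k! · ((a−1)·k + 1)!). -/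
/-! Let `R_r(n) = r/(an+r) · C(an+r, n)` be the Raney numbers, the coefficients of `F^r` where
`F = ∑ A_k x^k` solves `F = 1 + x F^a`; in particular `A_k = R_1(k)` and `F - 1 = x F^a`. The
recurrence `R_{r+1}(n+1) = R_r(n+1) + R_{r+a}(n)` gives the convolution `R_r * R_s = R_{r+s}`.
Splitting off the first block, the compositions of `m` weighted by `t^(#blocks) ∏ A_{m_i}` sum to
`∑_r t^r R_{ar}(m - r)`, the coefficient of `x^m` in `∑_r (t x F^a)^r`. With `t = a - 1` the
resulting sum `∑_r (a-1)^r R_{a(r+1)}(m - 1 - r)` telescopes to `C(am - 1, m - 1)`, because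
`R_s(j) = C(aj+s-1, (a-1)j+s-1) - (a-1) C(aj+s-1, (a-1)j+s)`. -/

open Finset
open scoped Nat

namespace Composition

def consEquiv (n : ℕ) : (Σ k : Fin (n + 1), Composition (n - k)) ≃ Composition (n + 1) where
  toFun p :=
    { blocks := (p.1 + 1) :: p.2.blocks
      blocks_pos := by
        rintro i (_ | ⟨_, hi⟩)
        exacts [Nat.succ_pos _, p.2.blocks_pos hi]
      blocks_sum := by
        rw [List.sum_cons, p.2.blocks_sum]
        omega }
  invFun c :=
    ⟨⟨c.blocks.headI - 1, by
        obtain ⟨_ | ⟨k, l⟩, -, hsum⟩ := c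
        · simp at hsum
        · simp only [List.sum_cons, List.headI_cons] at hsum ⊢
          omega⟩,
      { blocks := c.blocks.tail
        blocks_pos := fun hi => c.blocks_pos (List.mem_of_mem_tail hi)
        blocks_sum := by
          obtain ⟨_ | ⟨k, l⟩, hpos, hsum⟩ := c
          · simp at hsum
          · have := hpos List.mem_cons_self
            simp only [List.sum_cons, List.tail_cons, List.headI_cons] at hsum ⊢
            omega }⟩
  left_inv _ := rfl
  right_inv c := by
    obtain ⟨_ | ⟨k, l⟩, hpos, hsum⟩ := c
    · simp at hsum
    · ext1
      simp [Nat.sub_add_cancel (hpos List.mem_cons_self)]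

theorem sum_univ_succ {M : Type*} [AddCommMonoid M] (n : ℕ) (F : List ℕ → M) :
    ∑ c : Composition (n + 1), F c.blocks =
      ∑ k ∈ range (n + 1), ∑ c : Composition (n - k), F ((k + 1) :: c.blocks) := by
  rw [← (consEquiv n).sum_comp, Fintype.sum_sigma]
  exact Fin.sum_univ_eq_sum_range (fun k => ∑ c : Composition (n - k), F ((k + 1) :: c.blocks)) _

theorem sum_univ_zero {M : Type*} [AddCommMonoid M] (F : List ℕ → M) :
    ∑ c : Composition 0, F c.blocks = F [] := by
  have : ∀ c : Composition 0, c.blocks = [] := fun c => c.blocks_eq_nil.2 rfl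
  simp [this, composition_card]

end Composition

def compositionSum {R : Type*} [CommSemiring R] (t : R) (f : ℕ → R) (m : ℕ) : R :=
  ∑ c : Composition m, t ^ c.length * (c.blocks.map f).prod

section CompositionSum

variable {R : Type*} [CommSemiring R] (t : R) (f : ℕ → R)

theorem compositionSum_zero : compositionSum t f 0 = 1 :=
  (Composition.sum_univ_zero fun l => t ^ l.length * (l.map f).prod).trans (by simp)

theorem compositionSum_succ (n : ℕ) :
    compositionSum t f (n + 1) =
      ∑ k ∈ range (n + 1), t * f (k + 1) * compositionSum t f (n - k) := by
  refine (Composition.sum_univ_succ n fun l => t ^ l.length * (l.map f).prod).trans ?_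
  simp only [compositionSum, mul_sum, Composition.length, List.length_cons, List.map_cons,
    List.prod_cons, pow_succ]
  refine sum_congr rfl fun k _ => sum_congr rfl fun c _ => ?_
  ring

end CompositionSum

section Raney

variable (a : ℕ)

/-- The `if` only matters for `R_0(0) = 1`, where the closed formula would give `0`. -/
def raney (r n : ℕ) : ℚ :=
  if n = 0 then 1 else r * (a * n + r - 1)! / (n ! * ((a - 1) * n + r)!)

theorem raney_zero_right (r : ℕ) : raney a r 0 = 1 := if_pos rfl

theorem raney_succ (r n : ℕ) :
    raney a r (n + 1) = r * (a * (n + 1) + r - 1)! / ((n + 1)! * ((a - 1) * (n + 1) + r)!) :=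
  if_neg n.succ_ne_zero

theorem raney_zero_succ (n : ℕ) : raney a 0 (n + 1) = 0 := by simp [raney_succ]

theorem raney_of_pos {r : ℕ} (hr : 0 < r) (n : ℕ) :
    raney a r n = r * (a * n + r - 1)! / (n ! * ((a - 1) * n + r)!) := by
  rcases n with _ | n
  · obtain ⟨r, rfl⟩ : ∃ r', r = r' + 1 := ⟨r - 1, by omega⟩
    simp only [raney_zero_right, mul_zero, zero_add, Nat.add_sub_cancel, Nat.factorial_zero,
      Nat.factorial_succ, Nat.cast_mul, Nat.cast_one, one_mul]
    field_simp
  · exact raney_succ a r n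

theorem raney_one (k : ℕ) : raney a 1 k = (a * k)! / (k ! * ((a - 1) * k + 1)!) := by
  simp [raney_of_pos a one_pos]

theorem raney_succ_succ (ha : 0 < a) (r n : ℕ) :
    raney a (r + 1) (n + 1) = raney a r (n + 1) + raney a (r + a) n := by
  obtain ⟨b, rfl⟩ : ∃ b, a = b + 1 := ⟨a - 1, by omega⟩
  rw [raney_succ, raney_succ, raney_of_pos _ (by omega : 0 < r + (b + 1))]
  simp only [Nat.add_sub_cancel]
  have h1 : (b + 1) * (n + 1) + (r + 1) - 1 = ((b + 1) * n + b + r) + 1 := by ring_nf; omega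
  have h2 : (b + 1) * (n + 1) + r - 1 = (b + 1) * n + b + r := by ring_nf; omega
  have h3 : (b + 1) * n + (r + (b + 1)) - 1 = (b + 1) * n + b + r := by ring_nf; omega
  have h4 : b * (n + 1) + (r + 1) = (b * n + b + r) + 1 := by ring
  have h5 : b * (n + 1) + r = b * n + b + r := by ring
  have h6 : b * n + (r + (b + 1)) = (b * n + b + r) + 1 := by ring
  rw [h1, h2, h3, h4, h5, h6, Nat.factorial_succ (_ + b + r), Nat.factorial_succ (b * n + b + r),
    Nat.factorial_succ n]
  push_cast
  field_simp
  ring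

theorem sum_range_raney_mul_raney (ha : 0 < a) (s n : ℕ) : ∀ r : ℕ,
    ∑ k ∈ range (n + 1), raney a r k * raney a s (n - k) = raney a (r + s) n := by
  induction n with
  | zero => simp [raney_zero_right]
  | succ n ihn =>
    intro r
    induction r with
    | zero => simp [sum_range_succ', raney_zero_succ, raney_zero_right]
    | succ r ihr =>
      rw [sum_range_succ'] at ihr ⊢
      simp only [raney_succ_succ a ha, add_mul, sum_add_distrib, raney_zero_right,
        Nat.add_sub_add_right] at ihr ⊢
      rw [add_right_comm, ihr, ihn, add_right_comm r, add_right_comm r 1,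
        ← raney_succ_succ a ha]

theorem sum_range_raney_one_succ_mul_raney (ha : 0 < a) (s n : ℕ) :
    ∑ k ∈ range (n + 1), raney a 1 (k + 1) * raney a s (n - k) = raney a (s + a) n := by
  have h := sum_range_raney_mul_raney a ha s (n + 1) 1
  rw [sum_range_succ', add_comm 1 s, raney_succ_succ a ha] at h
  simp only [raney_zero_right, one_mul, Nat.sub_zero, Nat.add_sub_add_right] at h
  linarith

theorem raney_eq_choose_sub_choose (ha : 0 < a) {s : ℕ} (hs : 0 < s) (j : ℕ) :
    raney a s j = ((a * j + s - 1).choose ((a - 1) * j + s - 1) : ℚ)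
      - ((a : ℚ) - 1) * (a * j + s - 1).choose ((a - 1) * j + s) := by
  obtain ⟨b, rfl⟩ : ∃ b, a = b + 1 := ⟨a - 1, by omega⟩
  obtain ⟨u, rfl⟩ : ∃ u, s = u + 1 := ⟨s - 1, by omega⟩
  rcases j with _ | i
  · simp [raney_zero_right]
  · have hN : (b + 1) * (i + 1) + (u + 1) - 1 = (b * (i + 1) + u) + (i + 1) := by ring_nf; omega
    rw [raney_succ]
    simp only [Nat.add_sub_cancel, Nat.add_succ_sub_one, hN]
    rw [Nat.cast_choose ℚ (Nat.le_add_right _ _), Nat.cast_choose ℚ (by omega),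
      show b * (i + 1) + u + (i + 1) - (b * (i + 1) + u) = i + 1 by omega,
      show b * (i + 1) + u + (i + 1) - (b * (i + 1) + (u + 1)) = i by omega,
      show b * (i + 1) + (u + 1) = (b * (i + 1) + u) + 1 by ring,
      Nat.factorial_succ (b * (i + 1) + u), Nat.factorial_succ i]
    push_cast
    field_simp
    ring

theorem choose_eq_sum_range_raney (ha : 0 < a) (n : ℕ) :
    ((a * (n + 1) - 1).choose n : ℚ) =
      ∑ r ∈ range (n + 1), ((a : ℚ) - 1) ^ r * raney a (a * (r + 1)) (n - r) := by
  obtain ⟨b, rfl⟩ : ∃ b, a = b + 1 := ⟨a - 1, by omega⟩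
  let f (r : ℕ) : ℚ := (b : ℚ) ^ r * (b * (n + 1) + n).choose (b * (n + 1) + r)
  have hterm : ∀ r ∈ range (n + 1),
      ((↑(b + 1) : ℚ) - 1) ^ r * raney (b + 1) ((b + 1) * (r + 1)) (n - r) =
        f r - f (r + 1) := by
    intro r hr
    obtain ⟨j, rfl⟩ : ∃ j, n = r + j := ⟨n - r, by have := mem_range.mp hr; omega⟩
    rw [Nat.add_sub_cancel_left, raney_eq_choose_sub_choose _ ha (by positivity),
      Nat.add_sub_cancel]
    have h1 : (b + 1) * j + (b + 1) * (r + 1) - 1 = b * (r + j + 1) + (r + j) := by ring_nf; omega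
    have h2 : b * j + (b + 1) * (r + 1) - 1 = b * (r + j + 1) + r := by ring_nf; omega
    have h3 : b * j + (b + 1) * (r + 1) = b * (r + j + 1) + (r + 1) := by ring
    rw [h1, h2, h3]
    push_cast
    ring
  have hN : (b + 1) * (n + 1) - 1 = b * (n + 1) + n := by ring_nf; omega
  rw [sum_congr rfl hterm, sum_range_sub']
  simp [f, hN, Nat.choose_symm_add, Nat.choose_eq_zero_of_lt]

theorem sum_range_raney_one_succ_mul_sum (ha : 0 < a) (t : ℚ) (n : ℕ) :
    ∑ k ∈ range (n + 1), raney a 1 (k + 1) *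
        ∑ r ∈ range (n - k + 1), t ^ r * raney a (a * r) (n - k - r) =
      ∑ r ∈ range (n + 1), t ^ r * raney a (a * (r + 1)) (n - r) := by
  simp_rw [mul_sum]
  rw [sum_comm' (t' := range (n + 1)) (s' := fun r => range (n - r + 1))
    (by intro k r; simp only [mem_range]; omega)]
  refine sum_congr rfl fun r _ => ?_
  rw [mul_add, mul_one, ← sum_range_raney_one_succ_mul_raney a ha, mul_sum]
  refine sum_congr rfl fun k _ => ?_
  rw [Nat.sub_right_comm]
  ring

theorem compositionSum_raney_one (ha : 0 < a) (t : ℚ) (n : ℕ) :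
    compositionSum t (raney a 1) n = ∑ r ∈ range (n + 1), t ^ r * raney a (a * r) (n - r) := by
  induction n using Nat.strong_induction_on with
  | _ n ih =>
  rcases n with _ | n
  · simp [compositionSum_zero, raney_zero_right]
  calc compositionSum t (raney a 1) (n + 1)
      = t * ∑ k ∈ range (n + 1), raney a 1 (k + 1) *
          ∑ r ∈ range (n - k + 1), t ^ r * raney a (a * r) (n - k - r) := by
        rw [compositionSum_succ, mul_sum]
        refine sum_congr rfl fun k _ => ?_
        rw [ih (n - k) (by omega)]
        ring
    _ = ∑ r ∈ range (n + 1 + 1), t ^ r * raney a (a * r) (n + 1 - r) := by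
        rw [sum_range_raney_one_succ_mul_sum a ha, sum_range_succ' _ (n + 1), mul_sum]
        simp only [Nat.sub_zero, raney_zero_succ, mul_zero, add_zero, pow_succ,
          Nat.add_sub_add_right]
        exact sum_congr rfl fun r _ => by ring

end Raney

theorem choose_eq_sum_over_compositions_general (a m : ℕ) (ha : 2 ≤ a) :
    ((a * m - 1).choose (m - 1) : ℚ) =
      ∑ c : Composition m, ((a : ℚ) - 1) ^ (c.length - 1) *
        (c.blocks.map (fun k =>
          ((a * k).factorial : ℚ) /
            ((k.factorial : ℚ) * (((a - 1) * k + 1).factorial : ℚ)))).prod := by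
  simp only [← raney_one]
  rcases m with _ | n
  · simpa using (Composition.sum_univ_zero fun l =>
      ((a : ℚ) - 1) ^ (l.length - 1) * (l.map (raney a 1)).prod).symm
  have ha' : 0 < a := by omega
  calc ((a * (n + 1) - 1).choose (n + 1 - 1) : ℚ)
      = ∑ k ∈ range (n + 1),
          raney a 1 (k + 1) * compositionSum ((a : ℚ) - 1) (raney a 1) (n - k) := by
        simp only [Nat.add_sub_cancel, choose_eq_sum_range_raney a ha',
          compositionSum_raney_one a ha', sum_range_raney_one_succ_mul_sum a ha']
    _ = _ := by
        rw [Composition.sum_univ_succ n fun l =>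
          ((a : ℚ) - 1) ^ (l.length - 1) * (l.map (raney a 1)).prod]
        simp [compositionSum, mul_sum, mul_left_comm]

/-- `C(a·m − 1, m − 1)` equals `Σ_{r=1}^{m} (a−1)^{r−1} Σ ∏_{i=1}^{r} A_{m_i}`,
the inner sum ranging over compositions `(m_1, …, m_r)` of `m` into `r` positive
parts, where `A_k = (a·k)! / (k! · ((a−1)·k + 1)!)` are the Fuss–Catalan numbers.
(The double sum is expressed as a single sum over all compositions of `m`.) -/
theorem choose_eq_sum_over_compositions (a m : ℕ) (ha : 2 ≤ a) (hm : 1 ≤ m) :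
    ((a * m - 1).choose (m - 1) : ℚ) =
      ∑ c : Composition m, ((a : ℚ) - 1) ^ (c.length - 1) *
        (c.blocks.map (fun k =>
          ((a * k).factorial : ℚ) /
            ((k.factorial : ℚ) * (((a - 1) * k + 1).factorial : ℚ)))).prod :=
  choose_eq_sum_over_compositions_general a m ha
end

section
/- Fix an integer a ≥ 2 and an integer m ≥ 1. Let B_m denote the number of pyramids of size m and let R_k denote the number of right 0-pyramids of size k. Then B_m = Σ_{r=1}^{m} (a−1)^{r−1} · Σ ∏_{i=1}^{r} R_{m_i}, where the inner sum ranges over all compositions (m_1, …, m_r) of m into r positive integer parts. -/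
namespace Pyramid

open Finset

def Overlap (a : ℕ) (x y : ℤ) : Prop := |x - y| ≤ (a : ℤ) - 1

instance (a : ℕ) : DecidableRel (Overlap a) :=
  fun x y => inferInstanceAs (Decidable (|x - y| ≤ (a : ℤ) - 1))

section Overlap

variable {a : ℕ} {x y : ℤ}

theorem Overlap.symm (h : Overlap a x y) : Overlap a y x := by
  rwa [Overlap, abs_sub_comm]

theorem overlap_self (ha : 1 ≤ a) (x : ℤ) : Overlap a x x := by
  simp [Overlap]; omega

theorem overlap_iff : Overlap a x y ↔ x - y ≤ (a : ℤ) - 1 ∧ y - x ≤ (a : ℤ) - 1 :=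
  abs_sub_le_iff

end Overlap

def Separated (a : ℕ) (H : Finset (ℤ × ℕ)) : Prop :=
  ∀ p ∈ H, ∀ q ∈ H, p.2 = q.2 → Overlap a p.1 q.1 → p = q

def Supported (a : ℕ) (B H : Finset (ℤ × ℕ)) : Prop :=
  ∀ p ∈ H, 1 ≤ p.2 → ∃ q ∈ B, q.2 + 1 = p.2 ∧ Overlap a q.1 p.1

theorem Separated.mono {a : ℕ} {H H' : Finset (ℤ × ℕ)} (h : Separated a H) (h' : H' ⊆ H) :
    Separated a H' :=
  fun p hp q hq => h p (h' hp) q (h' hq)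

structure IsPyramidAt (a : ℕ) (s : ℤ) (H : Finset (ℤ × ℕ)) : Prop where
  base_mem : (s, 0) ∈ H
  eq_base : ∀ p ∈ H, p.2 = 0 → p = (s, 0)
  separated : Separated a H
  supported : Supported a H H

theorem isPyramid_iff_isPyramidAt_zero {a : ℕ} {P : Finset (ℤ × ℕ)} :
    IsPyramid a P ↔ IsPyramidAt a 0 P := by
  refine (and_congr Iff.rfl (and_congr Iff.rfl (and_congr ?_ ?_))).trans
    ⟨fun ⟨h₁, h₂, h₃, h₄⟩ => ⟨h₁, h₂, h₃, h₄⟩, fun ⟨h₁, h₂, h₃, h₄⟩ => ⟨h₁, h₂, h₃, h₄⟩⟩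
  · refine forall₂_congr fun p _ => forall₂_congr fun q _ => forall_congr' fun _ => ?_
    rw [Overlap]
    constructor
    · intro h hov
      by_contra hne
      have := h hne
      omega
    · intro h hne
      by_contra hlt
      exact hne (h (by omega))
  · refine forall₂_congr fun p _ => forall_congr' fun h1 => exists_congr fun q => ?_
    refine and_congr_right fun _ => ?_
    rw [Overlap, abs_sub_comm]
    omega

def shift (s : ℤ) (H : Finset (ℤ × ℕ)) : Finset (ℤ × ℕ) :=
  H.map ((Equiv.addRight s).prodCongr (Equiv.refl ℕ)).toEmbedding

section Shift

variable {H : Finset (ℤ × ℕ)}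

theorem mem_shift {s : ℤ} {p : ℤ × ℕ} : p ∈ shift s H ↔ (p.1 - s, p.2) ∈ H := by
  simp [shift, Finset.mem_map_equiv, Prod.map, sub_eq_add_neg]

@[simp] theorem card_shift (s : ℤ) : (shift s H).card = H.card := card_map _

theorem shift_shift (s t : ℤ) : shift s (shift t H) = shift (t + s) H := by
  ext p; simp only [mem_shift]; ring_nf

@[simp] theorem shift_zero : shift 0 H = H := by
  ext p; simp [mem_shift]

theorem IsPyramidAt.shift {a : ℕ} {s : ℤ} (hH : IsPyramidAt a s H) (t : ℤ) :
    IsPyramidAt a (s + t) (shift t H) := by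
  obtain ⟨hbase, hzero, hsep, hsupp⟩ := hH
  refine ⟨by simpa [mem_shift], fun p hp h0 => ?_, fun p hp q hq h2 hov => ?_, fun p hp h1 => ?_⟩
  · have := hzero _ (mem_shift.1 hp) h0
    simp only [Prod.mk.injEq] at this
    exact Prod.ext (by omega) this.2
  · have := hsep _ (mem_shift.1 hp) _ (mem_shift.1 hq) h2 (by simpa [Overlap] using hov)
    simp only [Prod.mk.injEq] at this
    exact Prod.ext (by omega) this.2
  · obtain ⟨q, hq, hq2, hov⟩ := hsupp _ (mem_shift.1 hp) h1
    refine ⟨(q.1 + t, q.2), by simpa [mem_shift], hq2, ?_⟩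
    simpa [Overlap, sub_sub_eq_add_sub, add_sub_right_comm] using hov

end Shift

/-- The height at which the piece of `S` at position `x` and level `j` comes to rest when the
heap `S` falls, keeping the order of its overlapping pieces, onto the heap `B`. -/
def landing (a : ℕ) (B S : Finset (ℤ × ℕ)) (j : ℕ) (x : ℤ) : ℕ :=
  max ((B.filter fun q => Overlap a q.1 x).sup fun q => q.2 + 1)
    ((S.filter fun v => v.2 < j ∧ Overlap a v.1 x).attach.sup
      fun v => landing a B S v.1.2 v.1.1 + 1)
termination_by j
decreasing_by exact (mem_filter.1 v.2).2.1

section Landing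

variable {a : ℕ} {B S : Finset (ℤ × ℕ)} {j : ℕ} {x : ℤ}

theorem landing_eq (a : ℕ) (B S : Finset (ℤ × ℕ)) (j : ℕ) (x : ℤ) :
    landing a B S j x = max ((B.filter fun q => Overlap a q.1 x).sup fun q => q.2 + 1)
      ((S.filter fun v => v.2 < j ∧ Overlap a v.1 x).sup
        fun v => landing a B S v.2 v.1 + 1) := by
  rw [landing]
  exact congrArg _ (sup_attach _ fun v : ℤ × ℕ => landing a B S v.2 v.1 + 1)

theorem lt_landing_of_mem_base {q : ℤ × ℕ} (hq : q ∈ B) (hov : Overlap a q.1 x) :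
    q.2 < landing a B S j x := by
  rw [landing_eq, Nat.lt_iff_add_one_le]
  exact le_max_of_le_left (le_sup (f := fun q : ℤ × ℕ => q.2 + 1) (mem_filter.2 ⟨hq, hov⟩))

theorem landing_lt_landing {v : ℤ × ℕ} (hv : v ∈ S) (hj : v.2 < j) (hov : Overlap a v.1 x) :
    landing a B S v.2 v.1 < landing a B S j x := by
  conv_rhs => rw [landing_eq]
  rw [Nat.lt_iff_add_one_le]
  exact le_max_of_le_right
    (le_sup (f := fun v : ℤ × ℕ => landing a B S v.2 v.1 + 1) (mem_filter.2 ⟨hv, hj, hov⟩))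

theorem landing_le {c : ℕ} (hB : ∀ q ∈ B, Overlap a q.1 x → q.2 < c)
    (hS : ∀ v ∈ S, v.2 < j → Overlap a v.1 x → landing a B S v.2 v.1 < c) :
    landing a B S j x ≤ c := by
  rw [landing_eq]
  refine max_le (Finset.sup_le fun q hq => ?_) (Finset.sup_le fun v hv => ?_)
  · exact hB q (mem_filter.1 hq).1 (mem_filter.1 hq).2
  · exact hS v (mem_filter.1 hv).1 (mem_filter.1 hv).2.1 (mem_filter.1 hv).2.2

theorem exists_of_landing_pos (h : 0 < landing a B S j x) :
    (∃ q ∈ B, Overlap a q.1 x ∧ landing a B S j x = q.2 + 1) ∨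
      ∃ v ∈ S, v.2 < j ∧ Overlap a v.1 x ∧ landing a B S j x = landing a B S v.2 v.1 + 1 := by
  rw [landing_eq] at h ⊢
  rcases le_total ((B.filter fun q => Overlap a q.1 x).sup fun q => q.2 + 1)
    ((S.filter fun v => v.2 < j ∧ Overlap a v.1 x).sup fun v => landing a B S v.2 v.1 + 1)
    with hle | hle
  · rw [max_eq_right hle] at h ⊢
    obtain ⟨v, hv, -⟩ := Finset.lt_sup_iff.1 h
    obtain ⟨v, hv, hmax⟩ := exists_mem_eq_sup _ ⟨v, hv⟩ fun v : ℤ × ℕ => landing a B S v.2 v.1 + 1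
    exact .inr ⟨v, (mem_filter.1 hv).1, (mem_filter.1 hv).2.1, (mem_filter.1 hv).2.2, hmax⟩
  · rw [max_eq_left hle] at h ⊢
    obtain ⟨q, hq, -⟩ := Finset.lt_sup_iff.1 h
    obtain ⟨q, hq, hmax⟩ := exists_mem_eq_sup _ ⟨q, hq⟩ fun q : ℤ × ℕ => q.2 + 1
    exact .inl ⟨q, (mem_filter.1 hq).1, (mem_filter.1 hq).2, hmax⟩

end Landing

def drop (a : ℕ) (B S : Finset (ℤ × ℕ)) : Finset (ℤ × ℕ) :=
  S.image fun v => (v.1, landing a B S v.2 v.1)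

section Drop

variable {a : ℕ} {B S : Finset (ℤ × ℕ)}

theorem mem_drop {p : ℤ × ℕ} :
    p ∈ drop a B S ↔ ∃ v ∈ S, (v.1, landing a B S v.2 v.1) = p :=
  mem_image

theorem lt_of_mem_base_of_mem_drop {q p : ℤ × ℕ} (hq : q ∈ B) (hp : p ∈ drop a B S)
    (hov : Overlap a q.1 p.1) : q.2 < p.2 := by
  obtain ⟨v, -, rfl⟩ := mem_drop.1 hp
  exact lt_landing_of_mem_base hq hov

theorem disjoint_drop (ha : 1 ≤ a) : Disjoint B (drop a B S) :=
  disjoint_left.2 fun _ hB hD => lt_irrefl _ (lt_of_mem_base_of_mem_drop hB hD (overlap_self ha _))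

theorem supported_drop : Supported a (B ∪ drop a B S) (drop a B S) := by
  intro _ hp h1
  obtain ⟨v, -, rfl⟩ := mem_drop.1 hp
  rcases exists_of_landing_pos h1 with ⟨q, hq, hov, heq⟩ | ⟨w, hw, -, hov, heq⟩
  · exact ⟨q, mem_union_left _ hq, heq.symm, hov⟩
  · exact ⟨_, mem_union_right _ (mem_drop.2 ⟨w, hw, rfl⟩), heq.symm, hov⟩

theorem Separated.lt_of_landing_lt (hS : Separated a S) {v w : ℤ × ℕ} (hv : v ∈ S) (hw : w ∈ S)
    (hov : Overlap a v.1 w.1) (h : landing a B S v.2 v.1 < landing a B S w.2 w.1) :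
    v.2 < w.2 := by
  rcases lt_trichotomy v.2 w.2 with hlt | heq | hgt
  · exact hlt
  · rw [hS v hv w hw heq hov] at h
    exact absurd h (lt_irrefl _)
  · exact absurd (landing_lt_landing hw hgt hov.symm) h.not_gt

theorem Separated.eq_of_landing_eq (hS : Separated a S) {v w : ℤ × ℕ} (hv : v ∈ S) (hw : w ∈ S)
    (hov : Overlap a v.1 w.1) (h : landing a B S v.2 v.1 = landing a B S w.2 w.1) : v = w := by
  refine hS v hv w hw ?_ hov
  rcases lt_trichotomy v.2 w.2 with hlt | heq | hgt
  · exact absurd h (landing_lt_landing hv hlt hov).ne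
  · exact heq
  · exact absurd h (landing_lt_landing hw hgt hov.symm).ne'

theorem separated_drop (hS : Separated a S) : Separated a (drop a B S) := by
  intro _ hp _ hq h2 hov
  obtain ⟨v, hv, rfl⟩ := mem_drop.1 hp
  obtain ⟨w, hw, rfl⟩ := mem_drop.1 hq
  rw [hS.eq_of_landing_eq hv hw hov h2]

theorem Separated.union_drop (hB : Separated a B) (hS : Separated a S) :
    Separated a (B ∪ drop a B S) := by
  intro p hp q hq h2 hov
  rcases mem_union.1 hp with hp | hp <;> rcases mem_union.1 hq with hq | hq
  · exact hB p hp q hq h2 hov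
  · exact absurd h2 (lt_of_mem_base_of_mem_drop hp hq hov).ne
  · exact absurd h2 (lt_of_mem_base_of_mem_drop hq hp hov.symm).ne'
  · exact separated_drop hS p hp q hq h2 hov

theorem Separated.card_drop (hS : Separated a S) (ha : 1 ≤ a) : (drop a B S).card = S.card := by
  refine card_image_of_injOn fun v hv w hw h => ?_
  simp only [Prod.mk.injEq] at h
  exact hS.eq_of_landing_eq hv hw (h.1 ▸ overlap_self ha _) h.2

theorem Separated.drop_drop (hS : Separated a S) {B' : Finset (ℤ × ℕ)}
    (hB' : ∀ q ∈ B', ∀ v ∈ S, Overlap a q.1 v.1 → q.2 < v.2) (hsupp : Supported a (B' ∪ S) S) :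
    drop a B' (drop a B S) = S := by
  have key : ∀ n, ∀ v ∈ S, v.2 = n →
      landing a B' (drop a B S) (landing a B S v.2 v.1) v.1 = v.2 := by
    intro n
    induction n using Nat.strong_induction_on with
    | _ n ih =>
      rintro v hv rfl
      refine le_antisymm (landing_le (fun q hq hov => hB' q hq v hv hov) ?_) ?_
      · intro _ hp hlt hov
        obtain ⟨w, hw, rfl⟩ := mem_drop.1 hp
        have hwv := hS.lt_of_landing_lt hw hv hov hlt
        rwa [ih w.2 hwv w hw rfl]
      · rcases Nat.eq_zero_or_pos v.2 with h0 | h1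
        · exact h0 ▸ Nat.zero_le _
        obtain ⟨r, hr, hr2, hov⟩ := hsupp v hv h1
        rcases mem_union.1 hr with hr | hr
        · exact hr2 ▸ lt_landing_of_mem_base hr hov
        · have hlt := landing_lt_landing (B := B) (j := v.2) hr (by omega) hov
          have := landing_lt_landing (B := B') (mem_drop.2 ⟨r, hr, rfl⟩) hlt hov
          rw [ih r.2 (by omega) r hr rfl] at this
          omega
  unfold drop at key ⊢
  rw [image_image]
  conv_rhs => rw [← image_id (s := S)]
  exact image_congr fun v hv => Prod.ext rfl (key _ v hv rfl)

end Drop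

section PyramidAt

variable {a : ℕ} {s : ℤ} {H : Finset (ℤ × ℕ)}

theorem IsPyramidAt.exists_mem_snd_eq (hH : IsPyramidAt a s H) {p : ℤ × ℕ} (hp : p ∈ H) {i : ℕ}
    (hi : i ≤ p.2) : ∃ q ∈ H, q.2 = i := by
  induction h : p.2 generalizing p with
  | zero => exact ⟨p, hp, by omega⟩
  | succ n ih =>
    rcases hi.eq_or_lt with rfl | hi
    · exact ⟨p, hp, rfl⟩
    obtain ⟨q, hq, hq2, -⟩ := hH.supported p hp (by omega)
    exact ih hq (by omega) (by omega)

theorem IsPyramidAt.snd_lt_card (hH : IsPyramidAt a s H) {p : ℤ × ℕ} (hp : p ∈ H) :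
    p.2 < H.card := by
  have hsub : range (p.2 + 1) ⊆ H.image Prod.snd := fun i hi => by
    obtain ⟨q, hq, rfl⟩ := hH.exists_mem_snd_eq hp (Nat.lt_succ_iff.1 (mem_range.1 hi))
    exact mem_image_of_mem _ hq
  simpa using (card_le_card hsub).trans card_image_le

theorem IsPyramidAt.abs_fst_sub_le (hH : IsPyramidAt a s H) {p : ℤ × ℕ} (hp : p ∈ H) :
    |p.1 - s| ≤ ((a : ℤ) - 1) * p.2 := by
  induction h : p.2 generalizing p with
  | zero => simp [hH.eq_base p hp h]
  | succ n ih =>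
    obtain ⟨q, hq, hq2, hov⟩ := hH.supported p hp (by omega)
    have hq := ih hq (by omega)
    have := abs_sub_le p.1 q.1 s
    rw [Overlap, abs_sub_comm] at hov
    push_cast
    linarith

end PyramidAt

theorem finite_isPyramid (a m : ℕ) :
    Finite {P : Finset (ℤ × ℕ) // IsPyramid a P ∧ P.card = m} := by
  let box : Finset (ℤ × ℕ) := Icc (-(a * m : ℤ)) (a * m) ×ˢ range m
  refine Set.Finite.to_subtype (box.powerset.finite_toSet.subset ?_)
  rintro P ⟨hP, rfl⟩
  rw [mem_coe, mem_powerset]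
  intro p hp
  rw [isPyramid_iff_isPyramidAt_zero] at hP
  have hh := hP.snd_lt_card hp
  have hc := hP.abs_fst_sub_le hp
  rw [sub_zero, abs_le] at hc
  have : ((a : ℤ) - 1) * p.2 ≤ a * P.card := by nlinarith
  simp only [box, mem_product, mem_Icc, mem_range]
  exact ⟨⟨by linarith, by linarith⟩, hh⟩

theorem finite_isRightPyramid (a m : ℕ) :
    Finite {P : Finset (ℤ × ℕ) // IsRightPyramid a P ∧ P.card = m} :=
  have := finite_isPyramid a m
  Finite.of_injective (fun P => (⟨P.1, P.2.1.1, P.2.2⟩ : {P // IsPyramid a P ∧ P.card = m}))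
    fun _ _ h => Subtype.ext (congrArg (fun P : {P // IsPyramid a P ∧ P.card = m} => P.1) h)

def StepUp (a : ℕ) (P : Finset (ℤ × ℕ)) (p q : ℤ × ℕ) : Prop :=
  q ∈ P ∧ Overlap a p.1 q.1 ∧ p.2 < q.2

open Classical in
noncomputable def upClosure (a : ℕ) (P : Finset (ℤ × ℕ)) (z : ℤ × ℕ) : Finset (ℤ × ℕ) :=
  P.filter (Relation.ReflTransGen (StepUp a P) z)

section UpClosure

variable {a : ℕ} {P : Finset (ℤ × ℕ)} {z : ℤ × ℕ}

theorem mem_upClosure {p : ℤ × ℕ} :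
    p ∈ upClosure a P z ↔ p ∈ P ∧ Relation.ReflTransGen (StepUp a P) z p := by
  classical
  simp [upClosure]

theorem upClosure_subset : upClosure a P z ⊆ P := fun _ hp => (mem_upClosure.1 hp).1

theorem self_mem_upClosure (hz : z ∈ P) : z ∈ upClosure a P z :=
  mem_upClosure.2 ⟨hz, .refl⟩

theorem mem_upClosure_of_stepUp {p q : ℤ × ℕ} (hp : p ∈ upClosure a P z) (hq : StepUp a P p q) :
    q ∈ upClosure a P z :=
  mem_upClosure.2 ⟨hq.1, (mem_upClosure.1 hp).2.tail hq⟩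

theorem eq_or_lt_of_mem_upClosure {p : ℤ × ℕ} (hp : p ∈ upClosure a P z) :
    p = z ∨ z.2 < p.2 := by
  obtain ⟨-, h⟩ := mem_upClosure.1 hp
  clear hp
  induction h with
  | refl => exact .inl rfl
  | tail _ hstep ih => exact .inr (ih.elim (fun h => h ▸ hstep.2.2) fun h => h.trans hstep.2.2)

end UpClosure

def superpose (a : ℕ) (Q S : Finset (ℤ × ℕ)) : Finset (ℤ × ℕ) := Q ∪ drop a Q S

section Superpose

variable {a : ℕ} {Q S : Finset (ℤ × ℕ)} {s : ℤ}

theorem IsPyramidAt.superpose (hQ : IsPyramidAt a 0 Q) (hS : IsPyramidAt a s S)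
    (hs : Overlap a 0 s) : IsPyramidAt a 0 (superpose a Q S) := by
  have hpos : ∀ p ∈ drop a Q S, 0 < p.2 := by
    intro _ hp
    obtain ⟨v, hv, rfl⟩ := mem_drop.1 hp
    rcases Nat.eq_zero_or_pos v.2 with h0 | h1
    · rw [hS.eq_base v hv h0]
      exact lt_landing_of_mem_base hQ.base_mem hs
    · obtain ⟨w, hw, hw2, hov⟩ := hS.supported v hv h1
      exact (Nat.zero_le _).trans_lt (landing_lt_landing hw (by omega) hov)
  refine ⟨mem_union_left _ hQ.base_mem, fun p hp h0 => ?_, hQ.separated.union_drop hS.separated,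
    fun p hp h1 => ?_⟩
  · rcases mem_union.1 hp with hp | hp
    · exact hQ.eq_base p hp h0
    · exact absurd h0 (hpos p hp).ne'
  · rcases mem_union.1 hp with hp | hp
    · obtain ⟨q, hq, h⟩ := hQ.supported p hp h1
      exact ⟨q, mem_union_left _ hq, h⟩
    · exact supported_drop p hp h1

theorem card_superpose (ha : 1 ≤ a) (hS : Separated a S) :
    (superpose a Q S).card = Q.card + S.card := by
  rw [superpose, card_union_of_disjoint (disjoint_drop ha), hS.card_drop ha]

theorem superpose_sdiff_drop (ha : 1 ≤ a) : superpose a Q S \ drop a Q S = Q :=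
  union_sdiff_cancel_right (disjoint_drop ha)

theorem upClosure_superpose (hS : IsPyramidAt a s S) :
    upClosure a (superpose a Q S) (s, landing a Q S 0 s) = drop a Q S := by
  have hbase : (s, landing a Q S 0 s) ∈ drop a Q S := mem_drop.2 ⟨(s, 0), hS.base_mem, rfl⟩
  ext p
  constructor
  · intro hp
    obtain ⟨-, h⟩ := mem_upClosure.1 hp
    clear hp
    induction h with
    | refl => exact hbase
    | tail _ hstep ih =>
      obtain ⟨hc, hov, hlt⟩ := hstep
      refine (mem_union.1 hc).resolve_left fun hcQ => ?_
      exact absurd hlt (lt_of_mem_base_of_mem_drop hcQ ih hov.symm).not_gt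
  · intro hp
    obtain ⟨v, hv, rfl⟩ := mem_drop.1 hp
    refine mem_upClosure.2 ⟨mem_union_right _ hp, ?_⟩
    clear hp
    induction h : v.2 generalizing v with
    | zero => rw [hS.eq_base v hv h]
    | succ n ih =>
      obtain ⟨w, hw, hw2, hov⟩ := hS.supported v hv (by omega)
      have hwn : w.2 = n := by omega
      refine (ih w hw hwn).tail ⟨mem_union_right _ (mem_drop.2 ⟨v, hv, by rw [h]⟩), hov, ?_⟩
      simpa [hwn] using landing_lt_landing (B := Q) (j := n + 1) hw (by omega) hov

end Superpose

section Decomposition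

variable {a : ℕ} {s : ℤ} {P : Finset (ℤ × ℕ)} {z : ℤ × ℕ}

theorem landing_upClosure_self : landing a ∅ (upClosure a P z) z.2 z.1 = 0 :=
  Nat.le_zero.1 <| landing_le (by simp) fun v hv hlt _ =>
    absurd hlt ((eq_or_lt_of_mem_upClosure hv).elim (fun h => h ▸ lt_irrefl _) lt_asymm)

theorem eq_of_landing_upClosure_eq_zero (hz : z ∈ P) {u : ℤ × ℕ} (hu : u ∈ upClosure a P z)
    (h0 : landing a ∅ (upClosure a P z) u.2 u.1 = 0) : u = z := by
  rcases (mem_upClosure.1 hu).2.cases_tail with h | ⟨b, hb, hstep⟩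
  · exact h
  · have hbU : b ∈ upClosure a P z := by
      refine mem_upClosure.2 ⟨?_, hb⟩
      cases hb with
      | refl => exact hz
      | tail _ h => exact h.1
    exact absurd h0 (landing_lt_landing hbU hstep.2.2 hstep.2.1).ne_bot

theorem isPyramidAt_drop_upClosure (hP : Separated a P) (hz : z ∈ P) :
    IsPyramidAt a z.1 (drop a ∅ (upClosure a P z)) where
  base_mem := mem_drop.2 ⟨z, self_mem_upClosure hz, by rw [landing_upClosure_self]⟩
  eq_base p hp h0 := by
    obtain ⟨u, hu, rfl⟩ := mem_drop.1 hp
    obtain rfl := eq_of_landing_upClosure_eq_zero hz hu h0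
    exact Prod.ext rfl h0
  separated := separated_drop (hP.mono upClosure_subset)
  supported := by simpa using supported_drop (a := a) (B := ∅) (S := upClosure a P z)

theorem IsPyramidAt.sdiff_upClosure (hP : IsPyramidAt a s P) (hz : z ≠ (s, 0)) :
    IsPyramidAt a s (P \ upClosure a P z) where
  base_mem := mem_sdiff.2 ⟨hP.base_mem, fun h =>
    (eq_or_lt_of_mem_upClosure h).elim (fun h => hz h.symm) (Nat.not_lt_zero _)⟩
  eq_base p hp := hP.eq_base p (mem_sdiff.1 hp).1
  separated := hP.separated.mono sdiff_subset
  supported p hp h1 := by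
    obtain ⟨hpP, hpU⟩ := mem_sdiff.1 hp
    obtain ⟨q, hq, hq2, hov⟩ := hP.supported p hpP h1
    refine ⟨q, mem_sdiff.2 ⟨hq, fun hqU => hpU ?_⟩, hq2, hov⟩
    exact mem_upClosure_of_stepUp hqU ⟨hpP, hov, by omega⟩

theorem superpose_sdiff_upClosure (hP : IsPyramidAt a s P) :
    superpose a (P \ upClosure a P z) (drop a ∅ (upClosure a P z)) = P := by
  have hU : upClosure a P z ⊆ P := upClosure_subset
  rw [superpose, (hP.separated.mono hU).drop_drop ?_ ?_, sdiff_union_of_subset hU]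
  · intro q hq v hv hov
    obtain ⟨hqP, hqU⟩ := mem_sdiff.1 hq
    rcases lt_trichotomy q.2 v.2 with hlt | heq | hgt
    · exact hlt
    · exact absurd (hP.separated q hqP v (hU hv) heq hov ▸ hv) hqU
    · exact absurd (mem_upClosure_of_stepUp hv ⟨hqP, hov.symm, hgt⟩) hqU
  · rw [sdiff_union_of_subset hU]
    exact fun p hp => hP.supported p (hU hp)

structure IsLowestNegative (P : Finset (ℤ × ℕ)) (z : ℤ × ℕ) : Prop where
  mem : z ∈ P
  fst_neg : z.1 < 0
  snd_le : ∀ w ∈ P, w.1 < 0 → z.2 ≤ w.2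

theorem exists_isLowestNegative (h : ∃ w ∈ P, w.1 < 0) : ∃ z, IsLowestNegative P z := by
  classical
  obtain ⟨w, hw, hw0⟩ := h
  obtain ⟨z, hz, hmin⟩ :=
    (P.filter fun p => p.1 < 0).exists_min_image Prod.snd ⟨w, mem_filter.2 ⟨hw, hw0⟩⟩
  exact ⟨z, (mem_filter.1 hz).1, (mem_filter.1 hz).2,
    fun w hw hw0 => hmin w (mem_filter.2 ⟨hw, hw0⟩)⟩

theorem IsLowestNegative.not_forall_nonneg (hz : IsLowestNegative P z) : ¬ ∀ p ∈ P, 0 ≤ p.1 :=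
  fun h => hz.fst_neg.not_ge (h z hz.mem)

theorem IsLowestNegative.ne_origin (hz : IsLowestNegative P z) : z ≠ (0, 0) := by
  rintro rfl
  exact lt_irrefl _ hz.fst_neg

theorem IsLowestNegative.one_sub_le (hP : IsPyramidAt a 0 P) (hz : IsLowestNegative P z) :
    1 - (a : ℤ) ≤ z.1 := by
  obtain ⟨hzP, hz0, hmin⟩ := hz
  have h1 : 1 ≤ z.2 := by
    by_contra h
    have := hP.eq_base z hzP (by omega)
    simp [this] at hz0
  obtain ⟨r, hr, hr2, hov⟩ := hP.supported z hzP h1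
  have : 0 ≤ r.1 := by
    by_contra h
    have := hmin r hr (by omega)
    omega
  rw [overlap_iff] at hov
  omega

theorem IsLowestNegative.unique (hP : IsPyramidAt a 0 P) {w : ℤ × ℕ}
    (hz : IsLowestNegative P z) (hw : IsLowestNegative P w) : z = w := by
  have hz1 := hz.one_sub_le hP
  have hw1 := hw.one_sub_le hP
  have := hz.fst_neg
  have := hw.fst_neg
  refine hP.separated z hz.mem w hw.mem
    (le_antisymm (hz.snd_le w hw.mem hw.fst_neg) (hw.snd_le z hz.mem hz.fst_neg)) ?_
  rw [overlap_iff]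
  omega

theorem IsLowestNegative.nonneg_of_mem_sdiff (hP : IsPyramidAt a 0 P) (hz : IsLowestNegative P z) :
    ∀ p ∈ P \ upClosure a P z, 0 ≤ p.1 := by
  have hQ := hP.sdiff_upClosure hz.ne_origin
  intro p hp
  induction h : p.2 generalizing p with
  | zero => simp [hQ.eq_base p hp h]
  | succ n ih =>
    obtain ⟨hpP, hpU⟩ := mem_sdiff.1 hp
    obtain ⟨r, hr, hr2, hov⟩ := hQ.supported p hp (by omega)
    have hr0 := ih r hr (by omega)
    by_contra hp0
    rw [not_le] at hp0
    have hpz : p ≠ z := by rintro rfl; exact hpU (self_mem_upClosure hz.mem)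
    have hlt : z.2 < p.2 := (hz.snd_le p hpP hp0).lt_of_ne fun h2 =>
      hpz (IsLowestNegative.unique hP ⟨hpP, hp0, fun w hw hw0 => h2 ▸ hz.snd_le w hw hw0⟩ hz)
    have hz1 := hz.one_sub_le hP
    have hz0 := hz.fst_neg
    rw [overlap_iff] at hov
    refine hpU (mem_upClosure_of_stepUp (self_mem_upClosure hz.mem) ⟨hpP, ?_, hlt⟩)
    rw [overlap_iff]
    omega

end Decomposition

section Bijection

variable {a : ℕ} {Q P' : Finset (ℤ × ℕ)} {s : ℤ}

theorem isPyramidAt_shift (hP' : IsPyramid a P') (s : ℤ) : IsPyramidAt a s (shift s P') := by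
  simpa using (isPyramid_iff_isPyramidAt_zero.1 hP').shift s

theorem drop_empty_drop (hS : IsPyramidAt a s P') : drop a ∅ (drop a Q P') = P' :=
  hS.separated.drop_drop (by simp) (by simpa using hS.supported)

theorem isPyramid_superpose_shift (hQ : IsPyramid a Q) (hs : s ∈ Set.Icc (1 - (a : ℤ)) (-1))
    (hP' : IsPyramid a P') : IsPyramid a (superpose a Q (shift s P')) := by
  refine isPyramid_iff_isPyramidAt_zero.2 <|
    (isPyramid_iff_isPyramidAt_zero.1 hQ).superpose (isPyramidAt_shift hP' s) ?_
  rw [overlap_iff]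
  exact ⟨by linarith [hs.1], by linarith [hs.2]⟩

theorem card_superpose_shift (hs : s ∈ Set.Icc (1 - (a : ℤ)) (-1)) (hP' : IsPyramid a P') :
    (superpose a Q (shift s P')).card = Q.card + P'.card := by
  rw [card_superpose (by have := hs.1.trans hs.2; omega) (isPyramidAt_shift hP' s).separated,
    card_shift]

theorem isLowestNegative_superpose_shift (hQ : IsRightPyramid a Q)
    (hs : s ∈ Set.Icc (1 - (a : ℤ)) (-1)) (hP' : IsPyramid a P') :
    IsLowestNegative (superpose a Q (shift s P')) (s, landing a Q (shift s P') 0 s) := by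
  refine ⟨mem_union_right _ (mem_drop.2 ⟨(s, 0), (isPyramidAt_shift hP' s).base_mem, rfl⟩),
    by linarith [hs.2], fun w hw hw0 => ?_⟩
  have hwD : w ∈ drop a Q (shift s P') :=
    (mem_union.1 hw).resolve_left fun hwQ => absurd (hQ.2 w hwQ) (not_le.2 hw0)
  rw [← upClosure_superpose (isPyramidAt_shift hP' s)] at hwD
  rcases eq_or_lt_of_mem_upClosure hwD with rfl | hlt
  exacts [le_rfl, hlt.le]

theorem eq_of_superpose_shift_eq {Q₁ Q₂ P₁ P₂ : Finset (ℤ × ℕ)} {s₁ s₂ : ℤ}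
    (hQ₁ : IsRightPyramid a Q₁) (hs₁ : s₁ ∈ Set.Icc (1 - (a : ℤ)) (-1)) (hP₁ : IsPyramid a P₁)
    (hQ₂ : IsRightPyramid a Q₂) (hs₂ : s₂ ∈ Set.Icc (1 - (a : ℤ)) (-1)) (hP₂ : IsPyramid a P₂)
    (h : superpose a Q₁ (shift s₁ P₁) = superpose a Q₂ (shift s₂ P₂)) :
    Q₁ = Q₂ ∧ s₁ = s₂ ∧ P₁ = P₂ := by
  have ha : 1 ≤ a := by have := hs₁.1.trans hs₁.2; omega
  have hz₂ := isLowestNegative_superpose_shift hQ₂ hs₂ hP₂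
  rw [← h] at hz₂
  have hz := (isLowestNegative_superpose_shift hQ₁ hs₁ hP₁).unique
    (isPyramid_iff_isPyramidAt_zero.1 (isPyramid_superpose_shift hQ₁.1 hs₁ hP₁)) hz₂
  obtain rfl : s₁ = s₂ := congrArg Prod.fst hz
  have hD : drop a Q₁ (shift s₁ P₁) = drop a Q₂ (shift s₁ P₂) := by
    rw [← upClosure_superpose (isPyramidAt_shift hP₁ s₁),
      ← upClosure_superpose (isPyramidAt_shift hP₂ s₁), h, hz]
  refine ⟨?_, rfl, ?_⟩
  · calc Q₁ = superpose a Q₁ (shift s₁ P₁) \ drop a Q₁ (shift s₁ P₁) :=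
          (superpose_sdiff_drop ha).symm
      _ = superpose a Q₂ (shift s₁ P₂) \ drop a Q₂ (shift s₁ P₂) := by rw [h, hD]
      _ = Q₂ := superpose_sdiff_drop ha
  · apply map_injective
    calc shift s₁ P₁ = drop a ∅ (drop a Q₁ (shift s₁ P₁)) :=
          (drop_empty_drop (isPyramidAt_shift hP₁ s₁)).symm
      _ = shift s₁ P₂ := by rw [hD, drop_empty_drop (isPyramidAt_shift hP₂ s₁)]

theorem exists_superpose_shift_eq {P : Finset (ℤ × ℕ)} (hP : IsPyramid a P)
    (hneg : ¬ ∀ p ∈ P, 0 ≤ p.1) :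
    ∃ Q s P', IsRightPyramid a Q ∧ s ∈ Set.Icc (1 - (a : ℤ)) (-1) ∧ IsPyramid a P' ∧
      superpose a Q (shift s P') = P := by
  rw [isPyramid_iff_isPyramidAt_zero] at hP
  push Not at hneg
  obtain ⟨z, hz⟩ := exists_isLowestNegative hneg
  refine ⟨P \ upClosure a P z, z.1, shift (-z.1) (drop a ∅ (upClosure a P z)),
    ⟨isPyramid_iff_isPyramidAt_zero.2 (hP.sdiff_upClosure hz.ne_origin),
      hz.nonneg_of_mem_sdiff hP⟩, ⟨hz.one_sub_le hP, by linarith [hz.fst_neg]⟩, ?_, ?_⟩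
  · rw [isPyramid_iff_isPyramidAt_zero]
    simpa using (isPyramidAt_drop_upClosure hP.separated hz.mem).shift (-z.1)
  · rw [shift_shift, neg_add_cancel, shift_zero, superpose_sdiff_upClosure hP]

end Bijection

section Counting

variable (a : ℕ)

theorem card_offsets : Nat.card (Set.Icc (1 - (a : ℤ)) (-1)) = a - 1 := by
  rw [Nat.card_eq_fintype_card, ← Set.toFinset_card, Set.toFinset_Icc, Int.card_Icc]
  omega

def Triples (m : ℕ) : Type :=
  {t : Finset (ℤ × ℕ) × ℤ × Finset (ℤ × ℕ) // (IsRightPyramid a t.1 ∧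
    t.2.1 ∈ Set.Icc (1 - (a : ℤ)) (-1) ∧ IsPyramid a t.2.2) ∧ t.1.card + t.2.2.card = m}

noncomputable def triplesEquivNotRight (m : ℕ) :
    Triples a m ≃ {P : Finset (ℤ × ℕ) // (IsPyramid a P ∧ P.card = m) ∧ ¬ ∀ p ∈ P, 0 ≤ p.1} := by
  refine Equiv.ofBijective (fun t => ⟨superpose a t.1.1 (shift t.1.2.1 t.1.2.2),
    ⟨isPyramid_superpose_shift t.2.1.1.1 t.2.1.2.1 t.2.1.2.2,
      (card_superpose_shift t.2.1.2.1 t.2.1.2.2).trans t.2.2⟩,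
    (isLowestNegative_superpose_shift t.2.1.1 t.2.1.2.1 t.2.1.2.2).not_forall_nonneg⟩) ⟨?_, ?_⟩
  · intro t₁ t₂ h
    obtain ⟨hQ, hs, hP⟩ := eq_of_superpose_shift_eq t₁.2.1.1 t₁.2.1.2.1 t₁.2.1.2.2
      t₂.2.1.1 t₂.2.1.2.1 t₂.2.1.2.2 (congrArg Subtype.val h)
    exact Subtype.ext (Prod.ext hQ (Prod.ext hs hP))
  · rintro ⟨P, ⟨hP, rfl⟩, hneg⟩
    obtain ⟨Q, s, P', hQ, hs, hP', rfl⟩ := exists_superpose_shift_eq hP hneg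
    exact ⟨⟨(Q, s, P'), ⟨hQ, hs, hP'⟩, (card_superpose_shift hs hP').symm⟩, rfl⟩

def triplesEquivSigma (m : ℕ) :
    Triples a m ≃ Σ k : Ico 1 m, {Q : Finset (ℤ × ℕ) // IsRightPyramid a Q ∧ Q.card = k} ×
      Set.Icc (1 - (a : ℤ)) (-1) × {P : Finset (ℤ × ℕ) // IsPyramid a P ∧ P.card = m - k} where
  toFun t := ⟨⟨t.1.1.card, mem_Ico.2 ⟨card_pos.2 ⟨_, t.2.1.1.1.1⟩, by
      have := card_pos.2 ⟨_, t.2.1.2.2.1⟩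
      have := t.2.2
      omega⟩⟩,
    ⟨t.1.1, t.2.1.1, rfl⟩, ⟨t.1.2.1, t.2.1.2.1⟩, ⟨t.1.2.2, t.2.1.2.2, by
      show _ = m - t.1.1.card
      have := t.2.2
      omega⟩⟩
  invFun x := ⟨(x.2.1.1, x.2.2.1.1, x.2.2.2.1), ⟨x.2.1.2.1, x.2.2.1.2, x.2.2.2.2.1⟩, by
    have := x.2.1.2.2
    have := x.2.2.2.2.2
    have := mem_Ico.1 x.1.2
    simp only
    omega⟩
  left_inv _ := rfl
  right_inv := by
    rintro ⟨⟨k, hk⟩, ⟨Q, hQ⟩, s, P', hP'⟩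
    obtain rfl : Q.card = k := hQ.2
    rfl

theorem card_isPyramid_not_right (m : ℕ) :
    Nat.card {P : Finset (ℤ × ℕ) // (IsPyramid a P ∧ P.card = m) ∧ ¬ ∀ p ∈ P, 0 ≤ p.1} =
      ∑ k ∈ Ico 1 m, (a - 1) * Nat.card {Q : Finset (ℤ × ℕ) // IsRightPyramid a Q ∧ Q.card = k} *
        Nat.card {P : Finset (ℤ × ℕ) // IsPyramid a P ∧ P.card = m - k} := by
  have := fun k => finite_isPyramid a k
  have := fun k => finite_isRightPyramid a k
  rw [← Nat.card_congr (triplesEquivNotRight a m), Nat.card_congr (triplesEquivSigma a m),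
    Nat.card_sigma, ← sum_coe_sort (Ico 1 m)]
  refine Fintype.sum_congr _ _ fun k => ?_
  rw [Nat.card_prod, Nat.card_prod, card_offsets]
  ring

theorem card_isPyramid (m : ℕ) :
    Nat.card {P : Finset (ℤ × ℕ) // IsPyramid a P ∧ P.card = m} =
      Nat.card {P : Finset (ℤ × ℕ) // IsRightPyramid a P ∧ P.card = m} +
        ∑ k ∈ Ico 1 m, (a - 1) * Nat.card {Q : Finset (ℤ × ℕ) // IsRightPyramid a Q ∧ Q.card = k} *
          Nat.card {P : Finset (ℤ × ℕ) // IsPyramid a P ∧ P.card = m - k} := by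
  have := finite_isPyramid a m
  let isPyr := fun P : Finset (ℤ × ℕ) => IsPyramid a P ∧ P.card = m
  let isRight := fun P : Finset (ℤ × ℕ) => ∀ p ∈ P, 0 ≤ p.1
  calc _ = Nat.card ({P : Subtype isPyr // isRight P} ⊕ {P : Subtype isPyr // ¬ isRight P}) :=
        Nat.card_congr (Equiv.sumCompl _).symm
    _ = _ := by
      rw [Nat.card_sum, ← card_isPyramid_not_right]
      congr 1
      · exact Nat.card_congr ((Equiv.subtypeSubtypeEquivSubtypeInter isPyr isRight).trans
          (Equiv.subtypeEquivRight fun P => and_right_comm))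
      · exact Nat.card_congr (Equiv.subtypeSubtypeEquivSubtypeInter isPyr fun P => ¬ isRight P)

end Counting

end Pyramid

namespace Composition

theorem sum_eq_sum_cons {M : Type*} [AddCommMonoid M] {m : ℕ} (hm : 1 ≤ m) (g : List ℕ → M) :
    ∑ c : Composition m, g c.blocks =
      ∑ k ∈ Finset.Icc 1 m, ∑ c : Composition (m - k), g (k :: c.blocks) := by
  let cons : (Σ k : Finset.Icc 1 m, Composition (m - k)) → Composition m := fun x =>
    ⟨x.1 :: x.2.blocks, by
      rintro i (_ | ⟨_, hi⟩)
      exacts [(Finset.mem_Icc.1 x.1.2).1, x.2.blocks_pos hi], by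
      simp only [List.sum_cons, x.2.blocks_sum]
      have := (Finset.mem_Icc.1 x.1.2).2
      omega⟩
  have hcons : Function.Bijective cons := by
    refine ⟨?_, fun c => ?_⟩
    · rintro ⟨⟨k, hk⟩, c⟩ ⟨⟨k', hk'⟩, c'⟩ h
      obtain ⟨rfl, hc⟩ := List.cons_eq_cons.1 (congrArg Composition.blocks h)
      obtain rfl := Composition.ext hc
      rfl
    · rcases c with ⟨_ | ⟨k, l⟩, hl, hsum⟩
      · simp only [List.sum_nil] at hsum
        omega
      · simp only [List.sum_cons] at hsum
        exact ⟨⟨⟨k, Finset.mem_Icc.2 ⟨hl (by simp), by omega⟩⟩,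
          ⟨l, fun hi => hl (List.mem_cons_of_mem _ hi), show l.sum = m - k by omega⟩⟩, rfl⟩
  rw [← (Equiv.ofBijective cons hcons).sum_comp, Fintype.sum_sigma,
    ← Finset.sum_coe_sort (Finset.Icc 1 m)]
  rfl

theorem sum_pow_mul_prod_eq {R : Type*} [CommSemiring R] (w : R) (f : ℕ → R) {m : ℕ}
    (hm : 1 ≤ m) :
    ∑ c : Composition m, w ^ (c.length - 1) * (c.blocks.map f).prod =
      f m + ∑ k ∈ Finset.Ico 1 m,
        w * f k * ∑ c : Composition (m - k), w ^ (c.length - 1) * (c.blocks.map f).prod := by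
  refine (sum_eq_sum_cons hm fun l => w ^ (l.length - 1) * (l.map f).prod).trans ?_
  rw [Finset.Icc_eq_cons_Ico hm, Finset.sum_cons]
  congr 1
  · have hblocks (c : Composition (m - m)) : c.blocks = [] :=
      List.length_eq_zero_iff.1 ((Composition.length_eq_zero c).2 (Nat.sub_self m))
    simp [hblocks, composition_card]
  · refine Finset.sum_congr rfl fun k hk => ?_
    rw [Finset.mul_sum]
    refine Finset.sum_congr rfl fun c _ => ?_
    have hc : 0 < c.length := c.length_pos_of_pos (by have := Finset.mem_Ico.1 hk; omega)
    simp only [List.length_cons, List.map_cons, List.prod_cons, Nat.add_sub_cancel]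
    rw [show c.blocks.length = c.length - 1 + 1 from (Nat.sub_add_cancel hc).symm, pow_succ]
    ring

end Composition

theorem pyramids_eq_sum_over_compositions_general (a m : ℕ) (hm : 1 ≤ m) :
    Nat.card {P : Finset (ℤ × ℕ) // IsPyramid a P ∧ P.card = m} =
      ∑ c : Composition m, (a - 1) ^ (c.length - 1) *
        (c.blocks.map (fun k =>
          Nat.card {P : Finset (ℤ × ℕ) // IsRightPyramid a P ∧ P.card = k})).prod := by
  induction m using Nat.strong_induction_on with
  | _ m ih =>
    rw [Pyramid.card_isPyramid, Composition.sum_pow_mul_prod_eq _ _ hm]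
    refine congrArg _ (Finset.sum_congr rfl fun k hk => ?_)
    have := Finset.mem_Ico.1 hk
    rw [ih (m - k) (by omega) (by omega)]

/-- The number `B_m` of pyramids of size `m` equals
`Σ_{r=1}^{m} (a−1)^{r−1} Σ ∏_{i=1}^{r} R_{m_i}`, the inner sum ranging over
compositions `(m_1, …, m_r)` of `m` into `r` positive parts, where `R_k` is the
number of right `0`-pyramids of size `k`. (The double sum is expressed as a
single sum over all compositions of `m`.) -/
theorem pyramids_eq_sum_over_compositions (a m : ℕ) (ha : 2 ≤ a) (hm : 1 ≤ m) :
    Nat.card {P : Finset (ℤ × ℕ) // IsPyramid a P ∧ P.card = m} =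
      ∑ c : Composition m, (a - 1) ^ (c.length - 1) *
        (c.blocks.map (fun k =>
          Nat.card {P : Finset (ℤ × ℕ) // IsRightPyramid a P ∧ P.card = k})).prod :=
  pyramids_eq_sum_over_compositions_general a m hm
end

section
/- Fix an integer a ≥ 2 and let A be the formal power series over ℚ in one variable t whose constant coefficient is 0 and whose coefficient of t^m is A_m = (a·m)! / (m! · ((a−1)·m + 1)!) for every m ≥ 1. Then A satisfies the identity A = t · (1 + A)^a in the ring of formal power series. -/
/-!
The Raney numbers `R_r(n) = r / (a n + r) · C(a n + r, n)` satisfy the Pascal-type rule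
`R_{r+1}(n+1) = R_r(n+1) + R_{r+a}(n)`, i.e. their generating functions satisfy
`S_{r+1} = S_r + t S_{r+a}` and `S_0 = 1`. This recurrence determines the family from `S_0`; since
`r ↦ S_{r+s}` and `r ↦ S_r S_s` both satisfy it, `S_{r+s} = S_r S_s` and so `S_r = S_1 ^ r`.
At `r = 0` the recurrence then reads `S_1 = 1 + t S_1 ^ a`, and `S_1 = 1 + A` because `R_1(m)` is
the Fuss–Catalan number `A_m`.
-/

open PowerSeries

/-- The `if` sets the value `1` at `r = n = 0`, where the formula reads `0 / 0`. -/
def raneyNumber (a r n : ℕ) : ℚ :=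
  if r = 0 ∧ n = 0 then 1 else r * (a * n + r).choose n / (a * n + r : ℕ)

lemma raneyNumber_zero_right (a r : ℕ) : raneyNumber a r 0 = 1 := by
  rcases eq_or_ne r 0 with rfl | hr
  · simp [raneyNumber]
  · simp [raneyNumber, hr]

lemma raneyNumber_zero_left (a : ℕ) {n : ℕ} (hn : n ≠ 0) : raneyNumber a 0 n = 0 := by
  simp [raneyNumber, hn]

lemma raneyNumber_succ_succ {a : ℕ} (ha : 0 < a) (r n : ℕ) :
    raneyNumber a (r + 1) (n + 1) = raneyNumber a r (n + 1) + raneyNumber a (r + a) n := by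
  have hra : ¬(r + a = 0 ∧ n = 0) := by omega
  simp only [raneyNumber, hra, Nat.add_one_ne_zero, and_false, if_false,
    show a * (n + 1) + (r + 1) = (a * n + a + r) + 1 by ring,
    show a * (n + 1) + r = a * n + a + r by ring, show a * n + (r + a) = a * n + a + r by ring]
  set M := a * n + a + r with hM
  have hM0 : (M : ℚ) ≠ 0 := by positivity
  have hup : ((M + 1).choose (n + 1) : ℚ) * (n + 1) = (M + 1) * M.choose n := by
    exact_mod_cast (Nat.add_one_mul_choose_eq M n).symm
  have hright : (M.choose (n + 1) : ℚ) * (n + 1) = M.choose n * (M - n) := by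
    have hnM : n ≤ M := by nlinarith
    exact_mod_cast Nat.choose_succ_right_eq M n
  have hMq : (M : ℚ) = a * n + a + r := by rw [hM]; push_cast; ring
  rw [← add_div, div_eq_div_iff (by positivity) hM0]
  refine mul_right_cancel₀ (n.cast_add_one_ne_zero (R := ℚ)) ?_
  push_cast
  linear_combination (r + 1 : ℚ) * M * hup - (M + 1) * r * hright + (M + 1) * M.choose n * hMq

lemma raneyNumber_one {a : ℕ} (ha : 0 < a) (m : ℕ) :
    raneyNumber a 1 m = ((a * m).factorial : ℚ) / (m.factorial * ((a - 1) * m + 1).factorial) := by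
  have hsub : a * m + 1 - m = (a - 1) * m + 1 := by
    have : m ≤ a * m := Nat.le_mul_of_pos_left m ha
    rw [Nat.sub_one_mul]; omega
  have h := Nat.choose_mul_factorial_mul_factorial (show m ≤ a * m + 1 by omega)
  rw [hsub, Nat.factorial_succ (a * m)] at h
  simp only [raneyNumber, one_ne_zero, false_and, if_false, Nat.cast_one, one_mul]
  rw [eq_div_iff (by positivity)]
  field_simp
  exact_mod_cast h

theorem PowerSeries.ext_of_succ_eq_add_X_mul {R : Type*} [Semiring R] {a : ℕ} {F G : ℕ → R⟦X⟧}
    (hF : ∀ r, F (r + 1) = F r + X * F (r + a)) (hG : ∀ r, G (r + 1) = G r + X * G (r + a))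
    (h0 : F 0 = G 0) : F = G := by
  suffices h : ∀ n r, coeff n (F r) = coeff n (G r) from funext fun r => ext fun n => h n r
  intro n
  induction n using Nat.strong_induction_on with
  | _ n ih =>
    intro r
    induction r with
    | zero => rw [h0]
    | succ r ihr =>
      rw [hF, hG, map_add, map_add, ihr]
      rcases n with _ | n
      · simp
      · rw [coeff_succ_X_mul, coeff_succ_X_mul, ih n n.lt_add_one]

def raneySeries (a r : ℕ) : ℚ⟦X⟧ := mk (raneyNumber a r)

lemma raneySeries_zero (a : ℕ) : raneySeries a 0 = 1 := by
  ext n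
  rcases eq_or_ne n 0 with rfl | hn
  · simp [raneySeries, raneyNumber_zero_right]
  · simp [raneySeries, raneyNumber_zero_left a hn, coeff_one, hn]

lemma raneySeries_succ {a : ℕ} (ha : 0 < a) (r : ℕ) :
    raneySeries a (r + 1) = raneySeries a r + X * raneySeries a (r + a) := by
  ext n
  rcases n with _ | n
  · simp [raneySeries, raneyNumber_zero_right]
  · simp [raneySeries, coeff_succ_X_mul, raneyNumber_succ_succ ha]

lemma raneySeries_add {a : ℕ} (ha : 0 < a) (r s : ℕ) :
    raneySeries a (r + s) = raneySeries a r * raneySeries a s := by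
  have h := ext_of_succ_eq_add_X_mul (a := a) (F := fun r => raneySeries a (r + s))
    (G := fun r => raneySeries a r * raneySeries a s)
    (fun r => by simp only [add_right_comm _ 1 s, add_right_comm _ a s, raneySeries_succ ha])
    (fun r => by simp only [raneySeries_succ ha, add_mul, mul_assoc])
    (by simp [raneySeries_zero])
  exact congrFun h r

lemma raneySeries_eq_pow {a : ℕ} (ha : 0 < a) (r : ℕ) : raneySeries a r = raneySeries a 1 ^ r := by
  induction r with
  | zero => exact raneySeries_zero a
  | succ r ih => rw [raneySeries_add ha, ih, pow_succ]

lemma raneySeries_one_eq {a : ℕ} (ha : 0 < a) :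
    raneySeries a 1 = 1 + X * raneySeries a 1 ^ a := by
  have h := raneySeries_succ ha 0
  rwa [zero_add, zero_add, raneySeries_zero, raneySeries_eq_pow ha a] at h

/-- The generating function `A(t) = Σ_{m≥1} A_m t^m` of the Fuss–Catalan numbers
`A_m = (a·m)! / (m! · ((a−1)·m + 1)!)` satisfies `A = t·(1 + A)^a`. -/
theorem fussCatalan_genfun_eq (a : ℕ) (ha : 2 ≤ a) (A : PowerSeries ℚ)
    (h0 : PowerSeries.coeff 0 A = 0)
    (hm : ∀ m, 1 ≤ m → PowerSeries.coeff m A =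
      ((a * m).factorial : ℚ) /
        ((m.factorial : ℚ) * (((a - 1) * m + 1).factorial : ℚ))) :
    A = PowerSeries.X * (1 + A) ^ a := by
  have ha₀ : 0 < a := by omega
  have hA : 1 + A = raneySeries a 1 := by
    ext m
    rcases m with _ | m
    · rw [map_add, h0]
      simp [raneySeries, raneyNumber_zero_right]
    · simp [raneySeries, raneyNumber_one ha₀, hm]
  have h := raneySeries_one_eq ha₀
  rw [← hA] at h
  exact add_left_cancel h
end

section
/- Fix an integer b ≥ 2 and let 𝒜 be the 2b × 2b matrix over ℤ with rows and columns indexed by pairs (i,R), i ∈ {0, …, b−1}, R ∈ {P,N}, whose entry 𝒜_{(i,R),(j,S)} equals 1 if (i = j and R ≠ S), or (i > j), or (i < j and R = P and S = N), and equals 0 otherwise. Then for every integer r ≥ 1, the sum over all columns (j,S) of the (0,P)-row of 𝒜^{r−1}, i.e. the quantity (1,0,0,…,0) · 𝒜^{r−1} · (1,1,…,1)^T, equals b^{r−1}. -/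
/-!
For `j ≤ b` let `g_j` be the row vector with `g_j ⬝ z = (b - j) z(j,P) + ∑_{k<j} z(k,N)`, so that
`g_0 ⬝ z = b z(0,P)`. Counting the entries of `𝒜` gives `g_j 𝒜 = ∑_{i<j} g_i + (b - j) g_b`.
Hence, if all the `g_j ⬝ z` equal a common value `c`, then all the `g_j ⬝ 𝒜z` equal
`j c + (b - j) c = b c`. Since `g_j ⬝ 1 = b` for every `j`, induction gives `g_j ⬝ 𝒜ⁿ1 = bⁿ⁺¹`,
and `j = 0` is the claim.
-/

/-- The adjacency matrix `𝒜 = ℰ + 𝒯 + 𝒰` of admissible compositions, with rows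
and columns indexed by pairs `(i, R)`, `i ∈ Fin b`, `R ∈ {P, N}` (here `P` is
modelled by `true` and `N` by `false`): the entry at `((i,R), (j,S))` is `1` iff
`(i = j ∧ R ≠ S) ∨ i > j ∨ (i < j ∧ R = P ∧ S = N)`, and `0` otherwise. -/
def calA (b : ℕ) : Matrix (Fin b × Bool) (Fin b × Bool) ℤ :=
  fun p q =>
    if (p.1 = q.1 ∧ p.2 ≠ q.2) ∨ q.1 < p.1 ∨
        (p.1 < q.1 ∧ p.2 = true ∧ q.2 = false) then 1 else 0

open Finset Matrix

section

variable {b : ℕ}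

lemma calA_apply_true_true (i k : Fin b) : calA b (i, true) (k, true) = if k < i then 1 else 0 := by
  simp [calA]

lemma calA_apply_true_false (i k : Fin b) : calA b (i, true) (k, false) = 1 := by
  simp [calA, eq_comm]

lemma calA_apply_false_true (i k : Fin b) : calA b (i, false) (k, true) = if k ≤ i then 1 else 0 := by
  simp [calA, le_iff_eq_or_lt, eq_comm]

lemma calA_apply_false_false (i k : Fin b) : calA b (i, false) (k, false) = if k < i then 1 else 0 := by
  simp [calA]

/-- The row vector `g_j`; for `j = b` its `P`-part vanishes. -/
def levelForm (b j : ℕ) : Fin b × Bool → ℤ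
  | (k, true) => if (k : ℕ) = j then (b : ℤ) - j else 0
  | (k, false) => if (k : ℕ) < j then 1 else 0

theorem levelForm_vecMul_calA {j : ℕ} (hj : j ≤ b) :
    levelForm b j ᵥ* calA b = ∑ i ∈ range j, levelForm b i + ((b : ℤ) - j) • levelForm b b := by
  ext ⟨m, _ | _⟩
  · simp only [vecMul, dotProduct, levelForm, Fintype.sum_prod_type, Fintype.sum_bool,
      calA_apply_true_false, calA_apply_false_false, mul_one, mul_ite, mul_zero, Pi.add_apply,
      Finset.sum_apply, Pi.smul_apply, smul_eq_mul, Fin.lt_def, ← ite_and, Fin.is_lt, if_true,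
      sum_boole]
    rw [Fin.sum_univ_eq_sum_range
      (fun x => (if x = j then (b : ℤ) - j else 0) + if (m : ℕ) < x ∧ x < j then 1 else 0),
      sum_add_distrib, sum_ite_eq', sum_boole]
    have hcount : {x ∈ range b | (m : ℕ) < x ∧ x < j} = {x ∈ range j | (m : ℕ) < x} := by
      ext x
      simp only [mem_filter, mem_range]
      omega
    simp only [hcount, mem_range]
    split_ifs <;> omega
  · simp only [vecMul, dotProduct, levelForm, Fintype.sum_prod_type, Fintype.sum_bool,
      calA_apply_true_true, calA_apply_false_true, mul_one, mul_ite, mul_zero, Pi.add_apply,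
      Finset.sum_apply, Pi.smul_apply, smul_eq_mul, Fin.lt_def, Fin.le_def, ← ite_and,
      sum_ite_eq, mem_range, sub_self, ite_self, add_zero]
    rw [Fin.sum_univ_eq_sum_range (fun x => (if (m : ℕ) < x ∧ x = j then (b : ℤ) - j else 0) +
      if (m : ℕ) ≤ x ∧ x < j then 1 else 0), sum_add_distrib, sum_boole]
    have hcount : {x ∈ range b | (m : ℕ) ≤ x ∧ x < j} = Ico (m : ℕ) j := by
      ext x
      simp only [mem_filter, mem_range, mem_Ico]
      omega
    simp only [hcount, Nat.card_Ico, and_comm (a := (m : ℕ) < _), ite_and, sum_ite_eq', mem_range]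
    split_ifs <;> omega

theorem levelForm_dotProduct_one {j : ℕ} (hj : j ≤ b) : levelForm b j ⬝ᵥ 1 = b := by
  simp only [dotProduct_one, levelForm, Fintype.sum_prod_type, Fintype.sum_bool, sum_add_distrib,
    sum_boole, Fin.card_filter_val_lt]
  rw [Fin.sum_univ_eq_sum_range (fun x => if x = j then (b : ℤ) - j else 0), sum_ite_eq']
  simp only [mem_range]
  split_ifs <;> omega

theorem levelForm_zero_dotProduct (hb : 0 < b) (z : Fin b × Bool → ℤ) :
    levelForm b 0 ⬝ᵥ z = b * z (⟨0, hb⟩, true) := by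
  simp only [dotProduct, levelForm, Fintype.sum_prod_type, Fintype.sum_bool, Nat.not_lt_zero,
    if_false, zero_mul, add_zero, Nat.cast_zero, sub_zero, ite_mul]
  rw [Fintype.sum_eq_single ⟨0, hb⟩ fun x hx => if_neg fun h => hx (Fin.ext h), if_pos rfl]

theorem levelForm_dotProduct_calA_pow_mulVec_one (n : ℕ) {j : ℕ} (hj : j ≤ b) :
    levelForm b j ⬝ᵥ (calA b ^ n *ᵥ 1) = (b : ℤ) ^ (n + 1) := by
  induction n generalizing j with
  | zero => rw [pow_zero, one_mulVec, levelForm_dotProduct_one hj, zero_add, pow_one]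
  | succ n ih =>
    rw [pow_succ', ← mulVec_mulVec, dotProduct_mulVec, levelForm_vecMul_calA hj, add_dotProduct,
      sum_dotProduct, smul_dotProduct, sum_congr rfl fun i hi => ih ((mem_range.1 hi).le.trans hj),
      ih le_rfl, sum_const, card_range, nsmul_eq_mul, smul_eq_mul]
    ring

end

/-- The sum of the `(0, P)`-row of `𝒜^{r−1}`, i.e. `(1,0,…,0)·𝒜^{r−1}·(1,…,1)ᵀ`,
equals `b^{r−1}` for every `r ≥ 1`. -/
theorem calA_row_sum (b : ℕ) (hb : 2 ≤ b) (r : ℕ) :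
    ∑ q : Fin b × Bool, ((calA b) ^ (r - 1)) (⟨0, by omega⟩, true) q
      = (b : ℤ) ^ (r - 1) := by
  have hb0 : 0 < b := by omega
  have key := levelForm_dotProduct_calA_pow_mulVec_one (b := b) (r - 1) (Nat.zero_le b)
  rw [levelForm_zero_dotProduct hb0, pow_succ', mulVec, dotProduct] at key
  simp only [Pi.one_apply, mul_one] at key
  exact mul_left_cancel₀ (by exact_mod_cast hb0.ne') key
end
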